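/- arXiv:2109.10785 — 8 statements merged into one kernel-verified Lean document; each statement's English description precedes it below -/
import Mathlib

section
/- Let |ψ⟩_{AB} = Σ_j c_j |u_j⟩⊗|v_j⟩ be a Schmidt decomposition of a unit vector in C^d ⊗ C^d with decreasing Schmidt coefficients c_j, and let p_0 > p_1 > ... > p_{d-1} > 0 with Σ_j p_j² = 1, |Ψ⟩ = Σ_j p_j |j⟩⊗|j⟩. Then max over unitaries U, V on C^d of |⟨Ψ|(U⊗V)|ψ⟩| equals Σ_j p_j c_j. -/
open Matrix Finset
open scoped Kronecker BigOperators

private def indLE (a b : ℕ) : ℝ := if a ≤ b then 1 else 0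

private lemma indLE_nonneg (a b : ℕ) : 0 ≤ indLE a b := by
  unfold indLE; split <;> norm_num

private lemma indLE_le_one (a b : ℕ) : indLE a b ≤ 1 := by
  unfold indLE; split <;> norm_num

private lemma indLE_mul_of_le {m n : ℕ} (h : m ≤ n) (t : ℕ) :
    indLE t m * indLE t n = indLE t m := by
  unfold indLE; split_ifs with h1 h2 <;> simp_all <;> omega

private lemma Tbound (d : ℕ) (S : Fin d → Fin d → ℝ) (hS0 : ∀ i j, 0 ≤ S i j)
    (hrow : ∀ i, ∑ j, S i j ≤ 1) (hcol : ∀ j, ∑ i, S i j ≤ 1) (m n : ℕ) :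
    ∑ i : Fin d, ∑ j : Fin d, indLE ↑i m * indLE ↑j n * S i j
      ≤ ∑ t ∈ range d, indLE t m * indLE t n := by
  rcases le_total m n with h | h
  · calc ∑ i : Fin d, ∑ j : Fin d, indLE ↑i m * indLE ↑j n * S i j
        ≤ ∑ i : Fin d, indLE ↑i m := by
          refine Finset.sum_le_sum fun i _ => ?_
          have : ∑ j : Fin d, indLE ↑i m * indLE ↑j n * S i j
              = indLE ↑i m * ∑ j : Fin d, indLE ↑j n * S i j := by
            rw [Finset.mul_sum]; exact Finset.sum_congr rfl fun j _ => by ring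
          rw [this]
          calc indLE ↑i m * ∑ j : Fin d, indLE ↑j n * S i j
              ≤ indLE ↑i m * 1 := by
                apply mul_le_mul_of_nonneg_left _ (indLE_nonneg _ _)
                calc ∑ j : Fin d, indLE ↑j n * S i j ≤ ∑ j : Fin d, S i j :=
                      Finset.sum_le_sum fun j _ => by
                        nlinarith [indLE_le_one (↑j) n, indLE_nonneg (↑j) n, hS0 i j]
                  _ ≤ 1 := hrow i
            _ = indLE ↑i m := mul_one _
      _ = ∑ t ∈ range d, indLE t m := Fin.sum_univ_eq_sum_range (fun t => indLE t _) d
      _ = ∑ t ∈ range d, indLE t m * indLE t n :=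
          Finset.sum_congr rfl fun t _ => (indLE_mul_of_le h t).symm
  · calc ∑ i : Fin d, ∑ j : Fin d, indLE ↑i m * indLE ↑j n * S i j
        = ∑ j : Fin d, ∑ i : Fin d, indLE ↑i m * indLE ↑j n * S i j := Finset.sum_comm
      _ ≤ ∑ j : Fin d, indLE ↑j n := by
          refine Finset.sum_le_sum fun j _ => ?_
          have : ∑ i : Fin d, indLE ↑i m * indLE ↑j n * S i j
              = indLE ↑j n * ∑ i : Fin d, indLE ↑i m * S i j := by
            rw [Finset.mul_sum]; exact Finset.sum_congr rfl fun i _ => by ring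
          rw [this]
          calc indLE ↑j n * ∑ i : Fin d, indLE ↑i m * S i j
              ≤ indLE ↑j n * 1 := by
                apply mul_le_mul_of_nonneg_left _ (indLE_nonneg _ _)
                calc ∑ i : Fin d, indLE ↑i m * S i j ≤ ∑ i : Fin d, S i j :=
                      Finset.sum_le_sum fun i _ => by
                        nlinarith [indLE_le_one (↑i) m, indLE_nonneg (↑i) m, hS0 i j]
                  _ ≤ 1 := hcol j
            _ = indLE ↑j n := mul_one _
      _ = ∑ t ∈ range d, indLE t n := Fin.sum_univ_eq_sum_range (fun t => indLE t _) d
      _ = ∑ t ∈ range d, indLE t m * indLE t n :=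
          Finset.sum_congr rfl fun t _ => by rw [mul_comm]; exact (indLE_mul_of_le h t).symm

private def extF (d : ℕ) (p : Fin d → ℝ) (n : ℕ) : ℝ :=
  if h : n < d then p ⟨n, h⟩ else 0

private lemma extF_antitone (d : ℕ) (p : Fin d → ℝ) (hp : ∀ j, 0 ≤ p j)
    (hpd : Antitone p) : Antitone (extF d p) := by
  apply antitone_nat_of_succ_le
  intro n
  unfold extF
  by_cases h1 : n + 1 < d
  · have h0 : n < d := Nat.lt_of_succ_lt h1
    simp only [h1, h0, dif_pos]
    exact hpd (by simp [Fin.mk_le_mk])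
  · by_cases h0 : n < d
    · simp only [h1, h0, dif_pos, dif_neg, not_false_iff]
      exact hp _
    · simp [h0, h1]

private lemma extF_expand (d : ℕ) (p : Fin d → ℝ) (t : ℕ) (ht : t < d) :
    ∑ m ∈ range d, (extF d p m - extF d p (m + 1)) * indLE t m = extF d p t := by
  have h1 : ∑ m ∈ range d, (extF d p m - extF d p (m + 1)) * indLE t m
      = ∑ m ∈ (range d).filter (fun m => t ≤ m), (extF d p m - extF d p (m + 1)) := by
    rw [Finset.sum_filter]
    exact Finset.sum_congr rfl fun m _ => by unfold indLE; split <;> simp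
  rw [h1]
  have h2 : (range d).filter (fun m => t ≤ m) = Finset.Ico t d := by
    ext a; simp [Finset.mem_filter, Finset.mem_Ico, Finset.mem_range, and_comm]
  rw [h2, Finset.sum_Ico_eq_sub _ (le_of_lt ht), Finset.sum_range_sub' (extF d p),
    Finset.sum_range_sub' (extF d p)]
  have hd : extF d p d = 0 := by simp [extF]
  rw [hd]; ring

private lemma rearrange (d : ℕ) (p c : Fin d → ℝ)
    (hp0 : ∀ j, 0 ≤ p j) (hpd : Antitone p)
    (hc0 : ∀ j, 0 ≤ c j) (hcd : Antitone c)
    (S : Fin d → Fin d → ℝ) (hS0 : ∀ i j, 0 ≤ S i j)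
    (hrow : ∀ i, ∑ j, S i j ≤ 1) (hcol : ∀ j, ∑ i, S i j ≤ 1) :
    ∑ i, ∑ j, p i * c j * S i j ≤ ∑ j, p j * c j := by
  set q := extF d p with hq
  set r := extF d c with hr
  have hΔq : ∀ m, 0 ≤ q m - q (m + 1) := fun m =>
    sub_nonneg.mpr (extF_antitone d p hp0 hpd (Nat.le_succ m))
  have hΔr : ∀ m, 0 ≤ r m - r (m + 1) := fun m =>
    sub_nonneg.mpr (extF_antitone d c hc0 hcd (Nat.le_succ m))
  -- step 1: expand p i and c j
  have key : ∀ i j : Fin d, p i * c j * S i j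
      = ∑ m ∈ range d, ∑ n ∈ range d,
          (q m - q (m + 1)) * (r n - r (n + 1)) * (indLE ↑i m * indLE ↑j n * S i j) := by
    intro i j
    have hpi : p i = ∑ m ∈ range d, (q m - q (m + 1)) * indLE ↑i m := by
      rw [hq, extF_expand d p ↑i i.isLt]; simp [extF, i.isLt]
    have hcj : c j = ∑ n ∈ range d, (r n - r (n + 1)) * indLE ↑j n := by
      rw [hr, extF_expand d c ↑j j.isLt]; simp [extF, j.isLt]
    rw [hpi, hcj, Finset.sum_mul_sum, Finset.sum_mul]
    exact Finset.sum_congr rfl fun m _ => by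
      rw [Finset.sum_mul]; exact Finset.sum_congr rfl fun n _ => by ring
  calc ∑ i, ∑ j, p i * c j * S i j
      = ∑ m ∈ range d, ∑ n ∈ range d, (q m - q (m + 1)) * (r n - r (n + 1)) *
          (∑ i : Fin d, ∑ j : Fin d, indLE ↑i m * indLE ↑j n * S i j) := by
        simp only [key]
        have s1 : ∀ i : Fin d, ∑ j : Fin d, ∑ m ∈ range d, ∑ n ∈ range d,
              (q m - q (m + 1)) * (r n - r (n + 1)) * (indLE ↑i m * indLE ↑j n * S i j)
            = ∑ m ∈ range d, ∑ j : Fin d, ∑ n ∈ range d,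
              (q m - q (m + 1)) * (r n - r (n + 1)) * (indLE ↑i m * indLE ↑j n * S i j) :=
          fun i => Finset.sum_comm
        rw [Finset.sum_congr rfl fun i _ => s1 i, Finset.sum_comm]
        refine Finset.sum_congr rfl fun m _ => ?_
        have s2 : ∀ i : Fin d, ∑ j : Fin d, ∑ n ∈ range d,
              (q m - q (m + 1)) * (r n - r (n + 1)) * (indLE ↑i m * indLE ↑j n * S i j)
            = ∑ n ∈ range d, ∑ j : Fin d,
              (q m - q (m + 1)) * (r n - r (n + 1)) * (indLE ↑i m * indLE ↑j n * S i j) :=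
          fun i => Finset.sum_comm
        rw [Finset.sum_congr rfl fun i _ => s2 i, Finset.sum_comm]
        refine Finset.sum_congr rfl fun n _ => ?_
        rw [Finset.mul_sum]
        refine Finset.sum_congr rfl fun i _ => ?_
        rw [Finset.mul_sum]
    _ ≤ ∑ m ∈ range d, ∑ n ∈ range d, (q m - q (m + 1)) * (r n - r (n + 1)) *
          (∑ t ∈ range d, indLE t m * indLE t n) := by
        refine Finset.sum_le_sum fun m _ => Finset.sum_le_sum fun n _ => ?_
        exact mul_le_mul_of_nonneg_left (Tbound d S hS0 hrow hcol m n)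
          (mul_nonneg (hΔq m) (hΔr n))
    _ = ∑ t ∈ range d, (∑ m ∈ range d, (q m - q (m + 1)) * indLE t m) *
          (∑ n ∈ range d, (r n - r (n + 1)) * indLE t n) := by
        have lhs : ∀ m n : ℕ, (q m - q (m + 1)) * (r n - r (n + 1)) *
              (∑ t ∈ range d, indLE t m * indLE t n)
            = ∑ t ∈ range d, ((q m - q (m + 1)) * indLE t m) * ((r n - r (n + 1)) * indLE t n) := by
          intro m n
          rw [Finset.mul_sum]
          exact Finset.sum_congr rfl fun t _ => by ring
        simp only [lhs]
        have swap : ∀ m ∈ range d, ∑ n ∈ range d, ∑ t ∈ range d,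
              ((q m - q (m + 1)) * indLE t m) * ((r n - r (n + 1)) * indLE t n)
            = ∑ t ∈ range d, ∑ n ∈ range d,
              ((q m - q (m + 1)) * indLE t m) * ((r n - r (n + 1)) * indLE t n) :=
          fun m _ => Finset.sum_comm
        rw [Finset.sum_congr rfl swap, Finset.sum_comm]
        refine Finset.sum_congr rfl fun t _ => ?_
        rw [Finset.sum_mul_sum]
    _ = ∑ t ∈ range d, q t * r t := Finset.sum_congr rfl fun t ht => by
        rw [hq, hr, extF_expand d p t (mem_range.mp ht), extF_expand d c t (mem_range.mp ht)]
    _ = ∑ j, p j * c j := by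
        rw [← Fin.sum_univ_eq_sum_range (fun t => q t * r t) d]
        refine Finset.sum_congr rfl fun j _ => ?_
        simp [hq, hr, extF, j.isLt]

private lemma value_eq (d : ℕ) (c p : Fin d → ℝ) (u v : Fin d → (Fin d → ℂ))
    (U V : Matrix (Fin d) (Fin d) ℂ) :
    ((star (fun q : Fin d × Fin d => if q.1 = q.2 then (p q.1 : ℂ) else 0)) ⬝ᵥ
        ((U ⊗ₖ V).mulVec (fun q : Fin d × Fin d => ∑ j, (c j : ℂ) * u j q.1 * v j q.2)))
      = ∑ i : Fin d, ∑ j : Fin d, (p i : ℂ) * (c j : ℂ)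
          * ((U * Matrix.of (fun k j => u j k)) i j)
          * ((V * Matrix.of (fun k j => v j k)) i j) := by
  simp only [dotProduct, Matrix.mulVec, Pi.star_apply, Fintype.sum_prod_type,
    Matrix.kroneckerMap_apply, dotProduct, Matrix.mul_apply, Matrix.of_apply]
  have hstar : ∀ (a b : Fin d), star (if a = b then (p a : ℂ) else 0)
      = (if a = b then (p a : ℂ) else 0) := by
    intro a b; split <;> simp
  simp only [hstar, ite_mul, zero_mul, Finset.sum_ite_eq, Finset.mem_univ, if_true]
  have inner : ∀ a : Fin d, (∑ k, ∑ l, U a k * V a l * ∑ j, (c j : ℂ) * u j k * v j l)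
      = ∑ j, (c j : ℂ) * ((∑ k, U a k * u j k) * (∑ l, V a l * v j l)) := by
    intro a
    calc (∑ k, ∑ l, U a k * V a l * ∑ j, (c j : ℂ) * u j k * v j l)
        = ∑ k, ∑ l, ∑ j, U a k * V a l * ((c j : ℂ) * u j k * v j l) := by
          refine Finset.sum_congr rfl fun k _ => Finset.sum_congr rfl fun l _ => ?_
          rw [Finset.mul_sum]
      _ = ∑ j, ∑ k, ∑ l, U a k * V a l * ((c j : ℂ) * u j k * v j l) := by
          rw [Finset.sum_congr rfl (fun k _ => Finset.sum_comm), Finset.sum_comm]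
      _ = ∑ j, (c j : ℂ) * ((∑ k, U a k * u j k) * (∑ l, V a l * v j l)) := by
          refine Finset.sum_congr rfl fun j _ => ?_
          rw [Finset.sum_mul_sum, Finset.mul_sum]
          refine Finset.sum_congr rfl fun k _ => ?_
          rw [Finset.mul_sum]
          exact Finset.sum_congr rfl fun l _ => by ring
  calc ∑ a : Fin d, (p a : ℂ) * ∑ k, ∑ l, U a k * V a l * ∑ j, (c j : ℂ) * u j k * v j l
      = ∑ a : Fin d, ∑ j, (p a : ℂ) * ((c j : ℂ) * ((∑ k, U a k * u j k) * (∑ l, V a l * v j l))) := by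
        refine Finset.sum_congr rfl fun a _ => ?_
        rw [inner a, Finset.mul_sum]
    _ = ∑ a : Fin d, ∑ j, ((p a : ℂ) * (c j : ℂ) * (∑ k, U a k * u j k)) * (∑ l, V a l * v j l) :=
        Finset.sum_congr rfl fun a _ => Finset.sum_congr rfl fun j _ => by ring

private lemma cols_unitary (d : ℕ) (u : Fin d → Fin d → ℂ)
    (hu : ∀ j k, star (u j) ⬝ᵥ u k = if j = k then (1 : ℂ) else 0) :
    Matrix.of (fun k j => u j k) ∈ Matrix.unitaryGroup (Fin d) ℂ := by
  rw [Matrix.mem_unitaryGroup_iff']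
  ext j k
  have := hu j k
  simp only [dotProduct, Pi.star_apply] at this
  simp only [Matrix.star_eq_conjTranspose, Matrix.mul_apply, Matrix.conjTranspose_apply,
    Matrix.of_apply, Matrix.one_apply]
  simpa using this

private lemma row_sq_sum (d : ℕ) (A : Matrix (Fin d) (Fin d) ℂ)
    (hA : A ∈ Matrix.unitaryGroup (Fin d) ℂ) (i : Fin d) :
    ∑ j, ‖A i j‖ ^ 2 = 1 := by
  have h := Matrix.mem_unitaryGroup_iff.mp hA
  have h2 : (A * star A) i i = 1 := by rw [h]; simp [Matrix.one_apply]
  rw [Matrix.mul_apply] at h2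
  have h3 : ∑ j, ((‖A i j‖ ^ 2 : ℝ) : ℂ) = 1 := by
    rw [← h2]
    refine Finset.sum_congr rfl fun j _ => ?_
    simp only [Matrix.star_eq_conjTranspose, Matrix.conjTranspose_apply, Complex.star_def]
    rw [Complex.mul_conj, Complex.normSq_eq_norm_sq]
  have h4 : ((∑ j, ‖A i j‖ ^ 2 : ℝ) : ℂ) = ((1 : ℝ) : ℂ) := by
    push_cast at h3 ⊢
    exact h3
  exact_mod_cast h4

private lemma col_sq_sum (d : ℕ) (A : Matrix (Fin d) (Fin d) ℂ)
    (hA : A ∈ Matrix.unitaryGroup (Fin d) ℂ) (j : Fin d) :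
    ∑ i, ‖A i j‖ ^ 2 = 1 := by
  have h := Matrix.mem_unitaryGroup_iff'.mp hA
  have h2 : (star A * A) j j = 1 := by rw [h]; simp [Matrix.one_apply]
  rw [Matrix.mul_apply] at h2
  have h3 : ∑ i, ((‖A i j‖ ^ 2 : ℝ) : ℂ) = 1 := by
    rw [← h2]
    refine Finset.sum_congr rfl fun i _ => ?_
    simp only [Matrix.star_eq_conjTranspose, Matrix.conjTranspose_apply, Complex.star_def]
    rw [mul_comm, Complex.mul_conj, Complex.normSq_eq_norm_sq]
  have h4 : ((∑ i, ‖A i j‖ ^ 2 : ℝ) : ℂ) = ((1 : ℝ) : ℂ) := by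
    push_cast at h3 ⊢
    exact h3
  exact_mod_cast h4

/-- Theorem 1: for `|ψ⟩ = ∑ⱼ cⱼ |uⱼ⟩⊗|vⱼ⟩` with decreasing Schmidt coefficients and
`|Ψ⟩ = ∑ⱼ pⱼ |j⟩⊗|j⟩` with strictly decreasing positive coefficients,
`max_{U,V} |⟨Ψ|(U⊗V)|ψ⟩| = ∑ⱼ pⱼ cⱼ`. -/
theorem max_fidelity_schmidt (d : ℕ) (c p : Fin d → ℝ) (u v : Fin d → (Fin d → ℂ))
    (hc0 : ∀ j, 0 ≤ c j) (hcdec : Antitone c) (hc1 : ∑ j, c j ^ 2 = 1)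
    (hu : ∀ j k, star (u j) ⬝ᵥ u k = if j = k then (1 : ℂ) else 0)
    (hv : ∀ j k, star (v j) ⬝ᵥ v k = if j = k then (1 : ℂ) else 0)
    (hp0 : ∀ j, 0 < p j) (hpdec : StrictAnti p) (hp1 : ∑ j, p j ^ 2 = 1) :
    IsGreatest
      {x : ℝ | ∃ U ∈ Matrix.unitaryGroup (Fin d) ℂ, ∃ V ∈ Matrix.unitaryGroup (Fin d) ℂ,
        x = ‖
          ((star (fun q : Fin d × Fin d => if q.1 = q.2 then (p q.1 : ℂ) else 0)) ⬝ᵥ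
            ((U ⊗ₖ V).mulVec (fun q : Fin d × Fin d => ∑ j, (c j : ℂ) * u j q.1 * v j q.2)))‖}
      (∑ j, p j * c j) := by
  set M : Matrix (Fin d) (Fin d) ℂ := Matrix.of (fun k j => u j k) with hMdef
  set N : Matrix (Fin d) (Fin d) ℂ := Matrix.of (fun k j => v j k) with hNdef
  have hM : M ∈ Matrix.unitaryGroup (Fin d) ℂ := cols_unitary d u hu
  have hN : N ∈ Matrix.unitaryGroup (Fin d) ℂ := cols_unitary d v hv
  constructor
  · -- membership: take U = star M, V = star N
    refine ⟨star M, Unitary.star_mem hM, star N, Unitary.star_mem hN, ?_⟩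
    rw [value_eq d c p u v (star M) (star N), ← hMdef, ← hNdef,
      Matrix.mem_unitaryGroup_iff'.mp hM, Matrix.mem_unitaryGroup_iff'.mp hN]
    have : (∑ i : Fin d, ∑ j : Fin d, (p i : ℂ) * (c j : ℂ)
        * ((1 : Matrix (Fin d) (Fin d) ℂ) i j) * ((1 : Matrix (Fin d) (Fin d) ℂ) i j))
        = ((∑ j, p j * c j : ℝ) : ℂ) := by
      push_cast
      refine Finset.sum_congr rfl fun i _ => ?_
      rw [Finset.sum_eq_single i]
      · simp [Matrix.one_apply]
      · intro b _ hb
        simp [Matrix.one_apply, Ne.symm hb]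
      · simp
    rw [this, Complex.norm_real, Real.norm_eq_abs, abs_of_nonneg]
    exact Finset.sum_nonneg fun j _ => mul_nonneg (hp0 j).le (hc0 j)
  · -- upper bound
    rintro x ⟨U, hU, V, hV, hx⟩
    rw [value_eq d c p u v U V, ← hMdef, ← hNdef] at hx
    set A : Matrix (Fin d) (Fin d) ℂ := U * M with hAdef
    set B : Matrix (Fin d) (Fin d) ℂ := V * N with hBdef
    have hA : A ∈ Matrix.unitaryGroup (Fin d) ℂ := mul_mem hU hM
    have hB : B ∈ Matrix.unitaryGroup (Fin d) ℂ := mul_mem hV hN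
    set S : Fin d → Fin d → ℝ :=
      fun i j => (‖A i j‖ ^ 2 + ‖B i j‖ ^ 2) / 2 with hSdef
    have hS0 : ∀ i j, 0 ≤ S i j := fun i j => by positivity
    have hrow : ∀ i, ∑ j, S i j ≤ 1 := by
      intro i
      rw [hSdef]
      simp only [← Finset.sum_div, Finset.sum_add_distrib]
      rw [row_sq_sum d A hA i, row_sq_sum d B hB i]
      norm_num
    have hcol : ∀ j, ∑ i, S i j ≤ 1 := by
      intro j
      rw [hSdef]
      simp only [← Finset.sum_div, Finset.sum_add_distrib]
      rw [col_sq_sum d A hA j, col_sq_sum d B hB j]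
      norm_num
    calc x ≤ ∑ i : Fin d, ∑ j : Fin d, p i * c j * S i j := by
          rw [hx]
          calc ‖∑ i : Fin d, ∑ j : Fin d, (p i : ℂ) * (c j : ℂ) * A i j * B i j‖
              ≤ ∑ i : Fin d, ‖∑ j : Fin d, (p i : ℂ) * (c j : ℂ) * A i j * B i j‖ :=
                norm_sum_le _ _
            _ ≤ ∑ i : Fin d, ∑ j : Fin d, ‖(p i : ℂ) * (c j : ℂ) * A i j * B i j‖ :=
                Finset.sum_le_sum fun i _ => norm_sum_le _ _
            _ ≤ ∑ i : Fin d, ∑ j : Fin d, p i * c j * S i j := by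
                refine Finset.sum_le_sum fun i _ => Finset.sum_le_sum fun j _ => ?_
                rw [norm_mul, norm_mul, norm_mul, Complex.norm_real, Complex.norm_real, Real.norm_eq_abs, Real.norm_eq_abs,
                  abs_of_nonneg (hp0 i).le, abs_of_nonneg (hc0 j)]
                have hab : ‖A i j‖ * ‖B i j‖ ≤ S i j := by
                  rw [hSdef]
                  nlinarith [sq_nonneg (‖A i j‖ - ‖B i j‖)]
                have := mul_le_mul_of_nonneg_left hab
                  (mul_nonneg (hp0 i).le (hc0 j) : (0:ℝ) ≤ p i * c j)
                calc p i * c j * ‖A i j‖ * ‖B i j‖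
                    = p i * c j * (‖A i j‖ * ‖B i j‖) := by ring
                  _ ≤ p i * c j * S i j := this
      _ ≤ ∑ j, p j * c j :=
          rearrange d p c (fun j => (hp0 j).le) hpdec.antitone hc0 hcdec S hS0 hrow hcol
end

section
/- For a unit vector |ψ⟩ = Σ_j c_j |u_j⟩⊗|v_j⟩ in C^d ⊗ C^d with Schmidt coefficients c_j, the maximum over unitaries U on C^d of |⟨Φ⁺|(U⊗I)|ψ⟩| equals (Σ_j c_j)/√d, where |Φ⁺⟩ = (1/√d) Σ_j |j⟩⊗|j⟩. -/
open Matrix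
open scoped Kronecker BigOperators

noncomputable def phiPlus (d : ℕ) : (Fin d × Fin d) → ℂ :=
  fun q => if q.1 = q.2 then ((Real.sqrt d)⁻¹ : ℝ) else 0

lemma aux_dot_le_one {d : ℕ} (x y : Fin d → ℂ) (hx : star x ⬝ᵥ x = 1)
    (hy : star y ⬝ᵥ y = 1) : ‖star x ⬝ᵥ y‖ ≤ 1 := by
  have key : ∀ a b : Fin d → ℂ, inner ℂ ((WithLp.equiv 2 (Fin d → ℂ)).symm a)
      ((WithLp.equiv 2 (Fin d → ℂ)).symm b) = star a ⬝ᵥ b := fun a b => by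
    rw [dotProduct_comm]; rfl
  have h := norm_inner_le_norm (𝕜 := ℂ) ((WithLp.equiv 2 _).symm x) ((WithLp.equiv 2 _).symm y)
  rw [key] at h
  have hx' := inner_self_eq_norm_sq (𝕜 := ℂ) ((WithLp.equiv 2 (Fin d → ℂ)).symm x)
  have hy' := inner_self_eq_norm_sq (𝕜 := ℂ) ((WithLp.equiv 2 (Fin d → ℂ)).symm y)
  rw [key, hx] at hx'
  rw [key, hy] at hy'
  simp only [RCLike.one_re] at hx' hy'
  have hx2 : ‖(WithLp.equiv 2 (Fin d → ℂ)).symm x‖ = 1 := by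
    nlinarith [norm_nonneg ((WithLp.equiv 2 (Fin d → ℂ)).symm x)]
  have hy2 : ‖(WithLp.equiv 2 (Fin d → ℂ)).symm y‖ = 1 := by
    nlinarith [norm_nonneg ((WithLp.equiv 2 (Fin d → ℂ)).symm y)]
  rw [hx2, hy2, one_mul] at h
  simpa using h

lemma aux_expand {d : ℕ} (c : Fin d → ℝ) (u v : Fin d → (Fin d → ℂ))
    (U : Matrix (Fin d) (Fin d) ℂ) :
    (star (phiPlus d)) ⬝ᵥ
        ((U ⊗ₖ (1 : Matrix (Fin d) (Fin d) ℂ)).mulVec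
          (fun q : Fin d × Fin d => ∑ j, (c j : ℂ) * u j q.1 * v j q.2))
      = (((Real.sqrt d)⁻¹ : ℝ) : ℂ) * ∑ j, (c j : ℂ) * (v j ⬝ᵥ U.mulVec (u j)) := by
  have swap3 : ∀ (f : Fin d → Fin d → Fin d → ℂ),
      ∑ k : Fin d, ∑ a : Fin d, ∑ j : Fin d, f k a j
        = ∑ j : Fin d, ∑ k : Fin d, ∑ a : Fin d, f k a j := fun f =>
    (Finset.sum_congr rfl fun _ _ => Finset.sum_comm).trans Finset.sum_comm
  simp only [dotProduct, mulVec, phiPlus, Pi.star_apply, Fintype.sum_prod_type,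
    kroneckerMap_apply, one_apply, dotProduct]
  simp only [apply_ite (star : ℂ → ℂ), star_zero, Complex.star_def, Complex.conj_ofReal]
  simp only [ite_mul, zero_mul, mul_ite, mul_zero, mul_one]
  rw [Finset.sum_comm]
  simp only [Finset.sum_ite_eq', Finset.sum_ite_eq, Finset.mem_univ, if_true]
  simp only [Finset.mul_sum]
  rw [swap3]
  exact Finset.sum_congr rfl fun j _ => Finset.sum_congr rfl fun k _ =>
    Finset.sum_congr rfl fun a _ => by ring

/-- Corollary 1: for a unit vector `|ψ⟩ = ∑ⱼ cⱼ |uⱼ⟩⊗|vⱼ⟩` with Schmidt coefficients `cⱼ`,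
`max_U |⟨Φ⁺|(U⊗I)|ψ⟩| = (∑ⱼ cⱼ)/√d`. -/
theorem max_fidelity_maxEntangled (d : ℕ) (c : Fin d → ℝ) (u v : Fin d → (Fin d → ℂ))
    (hc0 : ∀ j, 0 ≤ c j) (hcdec : Antitone c) (hc1 : ∑ j, c j ^ 2 = 1)
    (hu : ∀ j k, star (u j) ⬝ᵥ u k = if j = k then (1 : ℂ) else 0)
    (hv : ∀ j k, star (v j) ⬝ᵥ v k = if j = k then (1 : ℂ) else 0) :
    IsGreatest
      {x : ℝ | ∃ U ∈ Matrix.unitaryGroup (Fin d) ℂ,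
        x = ‖
          ((star (phiPlus d)) ⬝ᵥ
            ((U ⊗ₖ (1 : Matrix (Fin d) (Fin d) ℂ)).mulVec
              (fun q : Fin d × Fin d => ∑ j, (c j : ℂ) * u j q.1 * v j q.2)))‖}
      ((∑ j, c j) / Real.sqrt d) := by
  rcases Nat.eq_zero_or_pos d with hd | hd
  · subst hd; simp at hc1
  have hsq : (0 : ℝ) < Real.sqrt d := Real.sqrt_pos.2 (by exact_mod_cast hd)
  have habs : ‖(((Real.sqrt d)⁻¹ : ℝ) : ℂ)‖ = (Real.sqrt d)⁻¹ := by
    rw [Complex.norm_real, Real.norm_eq_abs, abs_of_nonneg (by positivity)]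
  constructor
  · -- membership: the optimal unitary
    set A : Matrix (Fin d) (Fin d) ℂ := Matrix.of fun a j => u j a with hA
    set C : Matrix (Fin d) (Fin d) ℂ := Matrix.of fun a j => star (v j a) with hC
    have hAu : Aᴴ * A = 1 := by
      ext j k
      have h := hu j k
      simp only [dotProduct, Pi.star_apply, Complex.star_def] at h
      simpa [Matrix.mul_apply, Matrix.conjTranspose_apply, hA, Matrix.one_apply] using h
    have hCv : Cᴴ * C = 1 := by
      ext j k
      have h := hv j k
      simp only [dotProduct, Pi.star_apply] at h
      simp only [Matrix.mul_apply, Matrix.conjTranspose_apply, hC, Matrix.of_apply,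
        star_star, Matrix.one_apply]
      calc ∑ a, v j a * star (v k a) = star (∑ a, star (v j a) * v k a) := by
            rw [star_sum]
            exact Finset.sum_congr rfl fun a _ => by simp [mul_comm]
        _ = if j = k then 1 else 0 := by rw [h]; split <;> simp
    have hAmem : A ∈ Matrix.unitaryGroup (Fin d) ℂ := by
      rw [Matrix.mem_unitaryGroup_iff']
      simpa [Matrix.star_eq_conjTranspose] using hAu
    have hCmem : C ∈ Matrix.unitaryGroup (Fin d) ℂ := by
      rw [Matrix.mem_unitaryGroup_iff']
      simpa [Matrix.star_eq_conjTranspose] using hCv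
    have hU0mem : C * Aᴴ ∈ Matrix.unitaryGroup (Fin d) ℂ := by
      have := mul_mem hCmem ((Unitary.star_mem_iff).2 hAmem)
      simpa [Matrix.star_eq_conjTranspose] using this
    refine ⟨C * Aᴴ, hU0mem, ?_⟩
    rw [aux_expand]
    have hmv : ∀ j, (C * Aᴴ).mulVec (u j) = star (v j) := by
      intro j
      have h1 : Aᴴ.mulVec (u j) = Pi.single j 1 := by
        ext k
        have := hu k j
        simp only [dotProduct, Pi.star_apply, Complex.star_def] at this
        simp [Matrix.mulVec, dotProduct, Matrix.conjTranspose_apply, hA, this,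
          Pi.single_apply]
      rw [← Matrix.mulVec_mulVec, h1]
      ext a
      simp [Matrix.mulVec, dotProduct, hC, Pi.single_apply, mul_ite]
    have hS : ∀ j, v j ⬝ᵥ (C * Aᴴ).mulVec (u j) = 1 := by
      intro j
      rw [hmv j, dotProduct_comm]
      simpa using hv j j
    simp only [hS, mul_one]
    rw [norm_mul, habs]
    have : (∑ j, ((c j : ℂ))) = ((∑ j, c j : ℝ) : ℂ) := by push_cast; ring
    rw [this, Complex.norm_real, Real.norm_eq_abs, abs_of_nonneg (Finset.sum_nonneg fun j _ => hc0 j)]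
    rw [div_eq_inv_mul]
  · -- upper bound
    rintro x ⟨U, hU, rfl⟩
    rw [aux_expand, norm_mul, habs]
    have hUnit : Uᴴ * U = 1 := by
      have := hU.1
      simpa [Matrix.star_eq_conjTranspose] using this
    have hSle : ∀ j, ‖v j ⬝ᵥ U.mulVec (u j)‖ ≤ 1 := by
      intro j
      have h1 : star (star (v j)) ⬝ᵥ star (v j) = 1 := by
        rw [star_star, dotProduct_comm]
        simpa using hv j j
      have h2 : star (U.mulVec (u j)) ⬝ᵥ U.mulVec (u j) = 1 := by
        rw [star_mulVec, dotProduct_mulVec, vecMul_vecMul, hUnit, vecMul_one]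
        simpa using hu j j
      have := aux_dot_le_one (star (v j)) (U.mulVec (u j)) h1 h2
      rwa [star_star] at this
    have hsum : ‖∑ j, (c j : ℂ) * (v j ⬝ᵥ U.mulVec (u j))‖ ≤ ∑ j, c j := by
      refine le_trans (norm_sum_le Finset.univ _) ?_
      refine Finset.sum_le_sum fun j _ => ?_
      rw [norm_mul, Complex.norm_real, Real.norm_eq_abs,
        abs_of_nonneg (hc0 j)]
      calc c j * ‖v j ⬝ᵥ U.mulVec (u j)‖ ≤ c j * 1 :=
        mul_le_mul_of_nonneg_left (hSle j) (hc0 j)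
      _ = c j := mul_one _
    rw [div_eq_inv_mul]
    exact mul_le_mul_of_nonneg_left hsum (by positivity)
end

section
/- Every state ρ on C^d ⊗ C^d that is positive under the partial reduction map, i.e., satisfies I ⊗ ρ_B − ρ ≥ 0 where ρ_B = Tr_A ρ, has fully entangled fraction χ(ρ) ≤ 1/d, where χ(ρ) = max over unitaries U on C^d of Tr[ρ (U⊗I)|Φ⁺⟩⟨Φ⁺|(U†⊗I)]. -/
open Matrix
open scoped Kronecker BigOperators ComplexOrder

/-- The projector `|Φ⁺⟩⟨Φ⁺|`. -/
noncomputable def phiProj (d : ℕ) : Matrix (Fin d × Fin d) (Fin d × Fin d) ℂ :=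
  Matrix.vecMulVec (phiPlus d) (star (phiPlus d))

/-- The partial trace over the first (A) factor. -/
noncomputable def ptraceA {d : ℕ} (ρ : Matrix (Fin d × Fin d) (Fin d × Fin d) ℂ) :
    Matrix (Fin d) (Fin d) ℂ :=
  fun i j => ∑ a, ρ (a, i) (a, j)

/-- The overlap `Tr[ρ (U⊗I)|Φ⁺⟩⟨Φ⁺|(U†⊗I)]` (a real number). -/
noncomputable def overlapMAXE {d : ℕ} (ρ : Matrix (Fin d × Fin d) (Fin d × Fin d) ℂ)
    (U : Matrix (Fin d) (Fin d) ℂ) : ℝ :=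
  (Matrix.trace (ρ * ((U ⊗ₖ (1 : Matrix (Fin d) (Fin d) ℂ)) * phiProj d *
    (U ⊗ₖ (1 : Matrix (Fin d) (Fin d) ℂ))ᴴ))).re

lemma trace_mul_vecMulVec {n : Type*} [Fintype n] (A : Matrix n n ℂ) (w v : n → ℂ) :
    (A * Matrix.vecMulVec w v).trace = v ⬝ᵥ (A *ᵥ w) := by
  simp only [Matrix.trace, Matrix.diag_apply, Matrix.mul_apply, Matrix.vecMulVec_apply,
    dotProduct, Matrix.mulVec]
  refine Finset.sum_congr rfl fun i _ => ?_
  rw [Finset.mul_sum]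
  exact Finset.sum_congr rfl fun j _ => by ring

lemma sandwich_vecMulVec {n : Type*} [Fintype n] (M : Matrix n n ℂ) (x : n → ℂ) :
    M * Matrix.vecMulVec x (star x) * Mᴴ
      = Matrix.vecMulVec (M *ᵥ x) (star (M *ᵥ x)) := by
  rw [Matrix.vecMulVec_eq Unit, Matrix.vecMulVec_eq Unit, Matrix.star_mulVec,
    Matrix.replicateCol_mulVec, Matrix.replicateRow_vecMul]
  simp only [Matrix.mul_assoc]

lemma kron_one_conjTranspose {d : ℕ} (U : Matrix (Fin d) (Fin d) ℂ) :
    (U ⊗ₖ (1 : Matrix (Fin d) (Fin d) ℂ))ᴴ = Uᴴ ⊗ₖ (1 : Matrix (Fin d) (Fin d) ℂ) := by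
  ext ⟨i, j⟩ ⟨k, l⟩
  simp only [Matrix.conjTranspose_apply, Matrix.kroneckerMap_apply, Matrix.one_apply, eq_comm]
  split <;> simp

lemma trace_ptraceA {d : ℕ} (ρ : Matrix (Fin d × Fin d) (Fin d × Fin d) ℂ) :
    (ptraceA ρ).trace = ρ.trace := by
  simp only [Matrix.trace, Matrix.diag_apply, ptraceA]
  rw [Fintype.sum_prod_type]
  rw [Finset.sum_comm]

lemma phi_quad {d : ℕ} (B : Matrix (Fin d) (Fin d) ℂ) :
    star (phiPlus d) ⬝ᵥ (((1 : Matrix (Fin d) (Fin d) ℂ) ⊗ₖ B) *ᵥ phiPlus d)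
      = (((d : ℝ)⁻¹ : ℝ) : ℂ) * B.trace := by
  have hc : ((Real.sqrt d : ℝ) : ℂ)⁻¹ * ((Real.sqrt d : ℝ) : ℂ)⁻¹ = ((d : ℂ))⁻¹ := by
    rw [← mul_inv, ← Complex.ofReal_mul, Real.mul_self_sqrt (by positivity)]
    push_cast; ring
  simp only [dotProduct, Matrix.mulVec, phiPlus, Matrix.kroneckerMap_apply, Matrix.one_apply,
    Pi.star_apply]
  rw [Fintype.sum_prod_type]
  simp only [Fintype.sum_prod_type, mul_ite, mul_zero, ite_mul, zero_mul, one_mul,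
    Finset.sum_ite_eq, Finset.sum_ite_eq', Finset.mem_univ, if_true,
    apply_ite (star : ℂ → ℂ), star_zero]
  rw [Matrix.trace, Finset.mul_sum]
  refine Finset.sum_congr rfl fun i _ => ?_
  simp only [Matrix.diag_apply, Complex.star_def, Complex.conj_ofReal]
  push_cast
  rw [← hc]
  ring

/-- Lemma 1: any state satisfying the reduction criterion `I ⊗ ρ_B − ρ ≥ 0` has fully
entangled fraction at most `1/d`: every overlap with a maximally entangled state is `≤ 1/d`. -/
theorem reduction_implies_chi_le (d : ℕ) (ρ : Matrix (Fin d × Fin d) (Fin d × Fin d) ℂ)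
    (hρ : ρ.PosSemidef) (htr : ρ.trace = 1)
    (hred : (((1 : Matrix (Fin d) (Fin d) ℂ) ⊗ₖ ptraceA ρ) - ρ).PosSemidef) :
    ∀ U ∈ Matrix.unitaryGroup (Fin d) ℂ, overlapMAXE ρ U ≤ 1 / d := by
  intro U hU
  set B := ptraceA ρ with hB
  set M := U ⊗ₖ (1 : Matrix (Fin d) (Fin d) ℂ) with hM
  set w := M *ᵥ phiPlus d with hw
  have h1 : overlapMAXE ρ U = ((star w) ⬝ᵥ (ρ *ᵥ w)).re := by
    rw [overlapMAXE, phiProj, ← hM, sandwich_vecMulVec, trace_mul_vecMulVec]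
  have hUU : Uᴴ * U = 1 := by
    simpa [Matrix.star_eq_conjTranspose] using hU.1
  have h2 : Mᴴ * ((1 : Matrix (Fin d) (Fin d) ℂ) ⊗ₖ B) * M
      = (1 : Matrix (Fin d) (Fin d) ℂ) ⊗ₖ B := by
    rw [hM, kron_one_conjTranspose, ← Matrix.mul_kronecker_mul, ← Matrix.mul_kronecker_mul]
    simp [hUU]
  have h3 : star w ⬝ᵥ (((1 : Matrix (Fin d) (Fin d) ℂ) ⊗ₖ B) *ᵥ w)
      = star (phiPlus d) ⬝ᵥ (((1 : Matrix (Fin d) (Fin d) ℂ) ⊗ₖ B) *ᵥ phiPlus d) := by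
    rw [hw, Matrix.star_mulVec, Matrix.mulVec_mulVec, ← Matrix.dotProduct_mulVec,
      Matrix.mulVec_mulVec, ← Matrix.mul_assoc, h2]
  have htrB : B.trace = 1 := by rw [hB, trace_ptraceA, htr]
  have h4 : star w ⬝ᵥ (((1 : Matrix (Fin d) (Fin d) ℂ) ⊗ₖ B) *ᵥ w) = (((d : ℝ)⁻¹ : ℝ) : ℂ) := by
    rw [h3, phi_quad, htrB, mul_one]
  have h5 := hred.dotProduct_mulVec_nonneg w
  rw [Matrix.sub_mulVec, dotProduct_sub] at h5
  have h6 : ((star w) ⬝ᵥ (ρ *ᵥ w)).re ≤ (star w ⬝ᵥ (((1 : Matrix (Fin d) (Fin d) ℂ) ⊗ₖ B) *ᵥ w)).re := by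
    have := (Complex.le_def.mp h5).1
    simp only [Complex.sub_re, Complex.zero_re] at this ⊢
    linarith
  rw [h1]
  calc ((star w) ⬝ᵥ (ρ *ᵥ w)).re ≤ _ := h6
    _ = (d : ℝ)⁻¹ := by rw [h4]; simp
    _ = 1 / d := (one_div _).symm
end

section
/- Every separable state ρ on C^d ⊗ C^d satisfies the reduction criterion: I ⊗ ρ_B − ρ is positive semidefinite, where ρ_B = Tr_A ρ. -/
open Matrix
open scoped Kronecker BigOperators ComplexOrder

/-- A state is separable if it is a convex combination of product states. -/
def IsSepState {d : ℕ} (ρ : Matrix (Fin d × Fin d) (Fin d × Fin d) ℂ) : Prop :=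
  ∃ (k : ℕ) (w : Fin k → ℝ) (σA σB : Fin k → Matrix (Fin d) (Fin d) ℂ),
    (∀ i, 0 ≤ w i) ∧ (∑ i, w i = 1) ∧
    (∀ i, (σA i).PosSemidef ∧ (σA i).trace = 1) ∧
    (∀ i, (σB i).PosSemidef ∧ (σB i).trace = 1) ∧
    ρ = ∑ i, (w i : ℂ) • (σA i ⊗ₖ σB i)

open Matrix
open scoped Kronecker BigOperators ComplexOrder

lemma psd_smul {n : Type*} [Fintype n] {M : Matrix n n ℂ} (hM : M.PosSemidef)
    {w : ℝ} (hw : 0 ≤ w) : ((w : ℂ) • M).PosSemidef := by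
  constructor
  · unfold Matrix.IsHermitian
    rw [conjTranspose_smul, hM.1]
    congr 1
    simp [Complex.ext_iff]
  · intro x
    exact (hM.smul (a := (w : ℂ)) (by exact_mod_cast hw)).2 x

lemma psd_kronecker {n m : Type*} [Fintype n] [Fintype m] [DecidableEq n] [DecidableEq m]
    {A : Matrix n n ℂ} {B : Matrix m m ℂ} (hA : A.PosSemidef) (hB : B.PosSemidef) :
    (A ⊗ₖ B).PosSemidef := by
  exact hA.kronecker hB

lemma one_sub_psd {n : Type*} [Fintype n] [DecidableEq n] {σ : Matrix n n ℂ}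
    (h : σ.PosSemidef) (ht : σ.trace = 1) : ((1 : Matrix n n ℂ) - σ).PosSemidef := by
  have hσ := h.1
  have hsum : ∑ i, hσ.eigenvalues i = 1 := by
    have : σ.trace = ∑ i, (hσ.eigenvalues i : ℂ) := by
      conv_lhs => rw [hσ.spectral_theorem]
      rw [Unitary.conjStarAlgAut_apply, Matrix.trace_mul_cycle,
        (Matrix.mem_unitaryGroup_iff').mp (hσ.eigenvectorUnitary).2, one_mul,
        Matrix.trace_diagonal]
      rfl
    rw [ht] at this
    exact_mod_cast this.symm
  have hle : ∀ i, hσ.eigenvalues i ≤ 1 := by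
    intro i
    rw [← hsum]
    exact Finset.single_le_sum (fun j _ => h.eigenvalues_nonneg j) (Finset.mem_univ i)
  have hU := (Matrix.mem_unitaryGroup_iff).mp (hσ.eigenvectorUnitary).2
  have key : (1 : Matrix n n ℂ) - σ =
      (hσ.eigenvectorUnitary : Matrix n n ℂ) *
        Matrix.diagonal (fun i => (1 - hσ.eigenvalues i : ℂ)) *
        (star (hσ.eigenvectorUnitary : Matrix n n ℂ)) := by
    have hd : Matrix.diagonal (fun i => (1 - hσ.eigenvalues i : ℂ)) =
        1 - Matrix.diagonal (RCLike.ofReal ∘ hσ.eigenvalues) := by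
      rw [← Matrix.diagonal_one, Matrix.diagonal_sub]
      rfl
    rw [hd, Matrix.mul_sub, Matrix.sub_mul, mul_one, hU]
    congr 1
    have hst := hσ.spectral_theorem
    rw [Unitary.conjStarAlgAut_apply] at hst
    exact hst
  rw [key]
  apply Matrix.PosSemidef.mul_mul_conjTranspose_same
  rw [Matrix.posSemidef_diagonal_iff]
  intro i
  rw [sub_nonneg]
  exact_mod_cast hle i

/-- Every separable state satisfies the reduction criterion: `I ⊗ ρ_B − ρ ≥ 0`. -/
theorem separable_satisfies_reduction (d : ℕ)
    (ρ : Matrix (Fin d × Fin d) (Fin d × Fin d) ℂ) (hsep : IsSepState ρ) :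
    (((1 : Matrix (Fin d) (Fin d) ℂ) ⊗ₖ ptraceA ρ) - ρ).PosSemidef := by
  obtain ⟨k, w, σA, σB, hw, hwsum, hA, hB, hρ⟩ := hsep
  have key : ((1 : Matrix (Fin d) (Fin d) ℂ) ⊗ₖ ptraceA ρ) - ρ =
      ∑ t, (w t : ℂ) • (((1 : Matrix (Fin d) (Fin d) ℂ) - σA t) ⊗ₖ σB t) := by
    subst hρ
    ext ⟨a, i⟩ ⟨b, j⟩
    have htr : ∀ t, ∑ c, σA t c c = 1 := fun t => (hA t).2
    simp only [ptraceA, Matrix.sub_apply, Matrix.kroneckerMap_apply, Matrix.sum_apply,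
      Matrix.smul_apply, smul_eq_mul, Finset.mul_sum]
    rw [Finset.sum_comm]
    simp only [Matrix.sub_apply, sub_mul, Finset.sum_sub_distrib, ← Finset.sum_mul,
      ← Finset.mul_sum]
    simp only [htr, mul_one]
    simp only [mul_sub, Finset.sum_sub_distrib, one_mul, Finset.mul_sum]
    congr 1
    exact Finset.sum_congr rfl fun x _ => by ring
  rw [key]
  apply Finset.sum_induction _ _ (fun a b => Matrix.PosSemidef.add) Matrix.PosSemidef.zero
  intro t _
  exact psd_smul (psd_kronecker (one_sub_psd (hA t).1 (hA t).2) (hB t).1) (hw t)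
end

section
/- For the state ρ_p = p|Φ⁺⟩⟨Φ⁺| + (1−p)|00⟩⟨00| with p ∈ [0,1] on C^d ⊗ C^d, the fully entangled fraction is χ(ρ_p) = p + (1−p)/d; in particular χ(ρ_p) > 1/d for all p > 0. -/
open Matrix
open scoped Kronecker BigOperators ComplexOrder

/-- The vector `|00⟩` in `ℂ^d ⊗ ℂ^d`. -/
def ket00 (d : ℕ) (hd : 0 < d) : (Fin d × Fin d) → ℂ :=
  fun q => if q = (⟨0, hd⟩, ⟨0, hd⟩) then 1 else 0


set_option linter.unusedSectionVars false

variable {n : Type*} [Fintype n] [DecidableEq n]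

lemma mul_vecMulVec' (A : Matrix n n ℂ) (w u : n → ℂ) :
    A * vecMulVec w u = vecMulVec (A *ᵥ w) u := by
  ext i j
  simp [mul_apply, vecMulVec_apply, mulVec, dotProduct, Finset.sum_mul, mul_assoc]

lemma vecMulVec_mul_conjT (A : Matrix n n ℂ) (v : n → ℂ) (w : n → ℂ) :
    vecMulVec v (star w) * Aᴴ = vecMulVec v (star (A *ᵥ w)) := by
  ext i j
  simp only [mul_apply, vecMulVec_apply, Pi.star_apply, conjTranspose_apply, mulVec,
    dotProduct, Complex.star_def, map_sum, _root_.map_mul, Finset.mul_sum]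
  exact Finset.sum_congr rfl fun k _ => by ring

lemma trace_vmv_mul_vmv (w v : n → ℂ) :
    Matrix.trace (vecMulVec w (star w) * vecMulVec v (star v))
      = (Complex.normSq (star w ⬝ᵥ v) : ℂ) := by
  rw [Matrix.trace, ← Complex.mul_conj]
  have hz : (starRingEnd ℂ) (star w ⬝ᵥ v) = ∑ q, w q * (starRingEnd ℂ) (v q) := by
    simp [dotProduct, Complex.star_def, _root_.map_mul]
  rw [hz]
  simp only [diag, mul_apply, vecMulVec_apply, Pi.star_apply, dotProduct,
    Complex.star_def, Finset.sum_mul_sum]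
  rw [Finset.sum_comm]
  exact Finset.sum_congr rfl fun r _ => Finset.sum_congr rfl fun q _ => by ring

lemma mulVec_phiPlus (d : ℕ) (U : Matrix (Fin d) (Fin d) ℂ) :
    (U ⊗ₖ (1 : Matrix (Fin d) (Fin d) ℂ)) *ᵥ phiPlus d
      = fun q => ((Real.sqrt d)⁻¹ : ℝ) * U q.1 q.2 := by
  ext ⟨i, j⟩
  simp only [mulVec, dotProduct, Fintype.sum_prod_type, kroneckerMap_apply, phiPlus, one_apply,
    mul_ite, mul_zero, mul_one, ite_mul, zero_mul, Finset.sum_ite_eq, Finset.mem_univ, if_true]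
  simp [Finset.sum_ite_eq', mul_comm]

lemma dot_phi (d : ℕ) (U : Matrix (Fin d) (Fin d) ℂ) :
    star (phiPlus d) ⬝ᵥ (fun q => (((Real.sqrt d)⁻¹ : ℝ) : ℂ) * U q.1 q.2)
      = (((Real.sqrt d)⁻¹ : ℝ) : ℂ)^2 * Matrix.trace U := by
  simp only [dotProduct, Pi.star_apply, phiPlus, Fintype.sum_prod_type, Matrix.trace, diag,
    Complex.star_def, apply_ite, map_zero, Complex.conj_ofReal, ite_mul, zero_mul,
    Finset.mul_sum]
  rw [Finset.sum_congr rfl fun i _ => Finset.sum_ite_eq (Finset.univ) i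
    (fun j => (((Real.sqrt d)⁻¹ : ℝ) : ℂ) * ((((Real.sqrt d)⁻¹ : ℝ) : ℂ) * U i j))]
  simp [pow_two, mul_assoc]

lemma dot_ket00 (d : ℕ) (hd : 0 < d) (U : Matrix (Fin d) (Fin d) ℂ) :
    star (ket00 d hd) ⬝ᵥ (fun q => (((Real.sqrt d)⁻¹ : ℝ) : ℂ) * U q.1 q.2)
      = (((Real.sqrt d)⁻¹ : ℝ) : ℂ) * U ⟨0, hd⟩ ⟨0, hd⟩ := by
  simp [dotProduct, ket00, Complex.star_def, apply_ite, ite_mul]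

lemma overlap_formula (d : ℕ) (hd : 0 < d) (p : ℝ) (U : Matrix (Fin d) (Fin d) ℂ) :
    overlapMAXE ((p : ℂ) • phiProj d +
        ((1 - p : ℝ) : ℂ) • vecMulVec (ket00 d hd) (star (ket00 d hd))) U
      = p * (Complex.normSq (Matrix.trace U) / (d:ℝ)^2)
        + (1 - p) * (Complex.normSq (U ⟨0,hd⟩ ⟨0,hd⟩) / d) := by
  have hdR : (0:ℝ) < d := by exact_mod_cast hd
  unfold overlapMAXE
  set A := U ⊗ₖ (1 : Matrix (Fin d) (Fin d) ℂ) with hA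
  have hM : A * phiProj d * Aᴴ = vecMulVec (A *ᵥ phiPlus d) (star (A *ᵥ phiPlus d)) := by
    rw [phiProj, mul_vecMulVec', vecMulVec_mul_conjT]
  rw [hM, Matrix.add_mul, Matrix.smul_mul, Matrix.smul_mul, Matrix.trace_add,
    Matrix.trace_smul, Matrix.trace_smul, phiProj, trace_vmv_mul_vmv, trace_vmv_mul_vmv,
    mulVec_phiPlus, dot_phi, dot_ket00]
  have hsq : ((Real.sqrt d)⁻¹ : ℝ)^2 = 1 / d := by
    rw [← Real.sqrt_inv, Real.sq_sqrt (by positivity)]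
    simp
  rw [smul_eq_mul, smul_eq_mul]
  rw [show ((((Real.sqrt d)⁻¹ : ℝ) : ℂ))^2 = ((1/d : ℝ) : ℂ) by push_cast [← hsq]; ring]
  simp only [Complex.normSq_mul, Complex.normSq_ofReal]
  simp only [← Complex.ofReal_mul, ← Complex.ofReal_add, Complex.ofReal_re]
  have hsq' : ((Real.sqrt d)⁻¹ : ℝ) * (Real.sqrt d)⁻¹ = 1 / d := by rw [← pow_two, hsq]
  rw [hsq']
  have : (d:ℝ) ≠ 0 := ne_of_gt hdR
  field_simp

lemma diag_normSq_le_one {d : ℕ} {U : Matrix (Fin d) (Fin d) ℂ}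
    (hU : U ∈ Matrix.unitaryGroup (Fin d) ℂ) (i : Fin d) : Complex.normSq (U i i) ≤ 1 := by
  have h := Matrix.mem_unitaryGroup_iff.mp hU
  have h1 : (U * Uᴴ) i i = 1 := by rw [show Uᴴ = star U from rfl, h]; simp
  have h2 : (∑ j, Complex.normSq (U i j) : ℝ) = 1 := by
    have := congrArg Complex.re h1
    simpa [Matrix.mul_apply, Matrix.conjTranspose_apply, Complex.mul_conj] using this
  calc Complex.normSq (U i i) ≤ ∑ j, Complex.normSq (U i j) :=
        Finset.single_le_sum (fun j _ => Complex.normSq_nonneg _) (Finset.mem_univ i)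
    _ = 1 := h2

lemma trace_normSq_le {d : ℕ} {U : Matrix (Fin d) (Fin d) ℂ}
    (hU : U ∈ Matrix.unitaryGroup (Fin d) ℂ) :
    Complex.normSq (Matrix.trace U) ≤ (d:ℝ)^2 := by
  have habs : ‖Matrix.trace U‖ ≤ d := by
    unfold Matrix.trace
    calc ‖∑ i, U.diag i‖ ≤ ∑ i : Fin d, ‖U i i‖ := by
          simpa [Matrix.diag] using
            norm_sum_le Finset.univ (fun i : Fin d => U i i)
      _ ≤ ∑ _i : Fin d, (1:ℝ) := by
          refine Finset.sum_le_sum fun i _ => ?_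
          have := diag_normSq_le_one hU i
          nlinarith [Complex.sq_norm (U i i), norm_nonneg (U i i)]
      _ = d := by simp
  have := Complex.sq_norm (Matrix.trace U)
  nlinarith [norm_nonneg (Matrix.trace U)]

/-- For the S state `ρ_p = p|Φ⁺⟩⟨Φ⁺| + (1−p)|00⟩⟨00|`, `χ(ρ_p) = p + (1−p)/d`;
in particular `χ(ρ_p) > 1/d` whenever `p > 0`. -/
theorem chi_S_state (d : ℕ) (hd : 1 < d) (p : ℝ) (hp : p ∈ Set.Icc (0 : ℝ) 1) :
    IsGreatest
      {x : ℝ | ∃ U ∈ Matrix.unitaryGroup (Fin d) ℂ,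
        x = overlapMAXE ((p : ℂ) • phiProj d +
          ((1 - p : ℝ) : ℂ) • Matrix.vecMulVec (ket00 d (by omega)) (star (ket00 d (by omega)))) U}
      (p + (1 - p) / d)
    ∧ (0 < p → p + (1 - p) / d > 1 / d) := by
  obtain ⟨hp0, hp1⟩ := hp
  have hd0 : 0 < d := by omega
  have hdR : (0:ℝ) < d := by exact_mod_cast hd0
  have hdR1 : (1:ℝ) < d := by exact_mod_cast hd
  constructor
  · constructor
    · refine ⟨1, Submonoid.one_mem _, ?_⟩
      rw [overlap_formula d hd0 p 1]
      have h1 : (1 : Matrix (Fin d) (Fin d) ℂ) ⟨0, hd0⟩ ⟨0, hd0⟩ = 1 := by simp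
      rw [h1, Matrix.trace_one]
      simp only [Complex.normSq_one]
      have : Complex.normSq ((Fintype.card (Fin d)) : ℂ) = (d:ℝ)^2 := by
        simp [Complex.normSq_natCast, pow_two]
      rw [this]
      field_simp
    · rintro x ⟨U, hU, rfl⟩
      rw [overlap_formula d hd0 p U]
      have ha : Complex.normSq (Matrix.trace U) / (d:ℝ)^2 ≤ 1 := by
        rw [div_le_one (by positivity)]
        exact trace_normSq_le hU
      have hb : Complex.normSq (U ⟨0, hd0⟩ ⟨0, hd0⟩) / (d:ℝ) ≤ 1 / d := by
        gcongr
        exact diag_normSq_le_one hU ⟨0, hd0⟩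
      have ha0 : 0 ≤ Complex.normSq (Matrix.trace U) / (d:ℝ)^2 :=
        div_nonneg (Complex.normSq_nonneg _) (by positivity)
      have h1 : p * (Complex.normSq (Matrix.trace U) / (d:ℝ)^2) ≤ p * 1 :=
        mul_le_mul_of_nonneg_left ha hp0
      have h2 : (1 - p) * (Complex.normSq (U ⟨0, hd0⟩ ⟨0, hd0⟩) / (d:ℝ)) ≤ (1 - p) * (1 / d) :=
        mul_le_mul_of_nonneg_left hb (by linarith)
      have : p + (1 - p) * (1/d) = p + (1 - p) / d := by ring
      linarith
  · intro hppos
    have hlt : (1:ℝ)/d < 1 := (div_lt_one hdR).mpr hdR1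
    have : p + (1 - p) / d - 1 / d = p * (1 - 1/d) := by field_simp; ring
    nlinarith
end

section
/- For any separable state ρ on C^d ⊗ C^d and the state |Ψ⟩ = Σ_j p_j |j⟩⊗|j⟩ with decreasing positive coefficients p_j (Σ p_j² = 1), one has max over unitaries U, V of ⟨Ψ|(U⊗V)ρ(U†⊗V†)|Ψ⟩ ≤ max_j p_j² = p_0². -/
open Matrix
open scoped Kronecker BigOperators ComplexOrder

lemma psd_diag_nonneg {d : ℕ} {A : Matrix (Fin d) (Fin d) ℂ} (hA : A.PosSemidef) (j : Fin d) :
    0 ≤ (A j j).re := by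
  have h := hA.dotProduct_mulVec_nonneg (Pi.single j 1)
  simp [dotProduct, mulVec, Pi.single_apply] at h
  exact (Complex.le_def.mp h).1

lemma psd_entry_bound {d : ℕ} {A : Matrix (Fin d) (Fin d) ℂ} (hA : A.PosSemidef)
    (j k : Fin d) : ‖A j k‖ ≤ Real.sqrt ((A j j).re) * Real.sqrt ((A k k).re) := by
  obtain ⟨B, hB⟩ : ∃ B : Matrix (Fin d) (Fin d) ℂ, A = star B * B := by
    classical
    open scoped Matrix.Norms.L2Operator MatrixOrder in
    exact CStarAlgebra.nonneg_iff_eq_star_mul_self.mp hA.nonneg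
  rw [Matrix.star_eq_conjTranspose] at hB
  subst hB
  set u : EuclideanSpace ℂ (Fin d) := (WithLp.equiv 2 _).symm (fun i => B i j) with hu
  set v : EuclideanSpace ℂ (Fin d) := (WithLp.equiv 2 _).symm (fun i => B i k) with hv
  have h1 : (Bᴴ * B) j k = inner ℂ u v := by
    simp [Matrix.mul_apply, Matrix.conjTranspose_apply, PiLp.inner_apply, hu, hv, mul_comm]
  have h2 : ((Bᴴ * B) j j).re = ‖u‖ ^ 2 := by
    have : (Bᴴ * B) j j = inner ℂ u u := by
      simp [Matrix.mul_apply, Matrix.conjTranspose_apply, PiLp.inner_apply, hu, mul_comm, -inner_self_eq_norm_sq_to_K]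
    rw [this, ← inner_self_eq_norm_sq (𝕜 := ℂ)]; rfl
  have h3 : ((Bᴴ * B) k k).re = ‖v‖ ^ 2 := by
    have : (Bᴴ * B) k k = inner ℂ v v := by
      simp [Matrix.mul_apply, Matrix.conjTranspose_apply, PiLp.inner_apply, hv, mul_comm, -inner_self_eq_norm_sq_to_K]
    rw [this, ← inner_self_eq_norm_sq (𝕜 := ℂ)]; rfl
  rw [h1, h2, h3, Real.sqrt_sq (norm_nonneg _), Real.sqrt_sq (norm_nonneg _)]
  exact norm_inner_le_norm u v

lemma key_lemma {d : ℕ} (hd : 0 < d) (p : Fin d → ℝ) (hp0 : ∀ j, 0 < p j) (hpdec : StrictAnti p)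
    {A B : Matrix (Fin d) (Fin d) ℂ} (hA : A.PosSemidef) (hB : B.PosSemidef)
    (hAt : A.trace = 1) (hBt : B.trace = 1) :
    (∑ j, ∑ k, ((p j : ℂ) * p k * (A j k * B j k))).re ≤ p ⟨0, hd⟩ ^ 2 := by
  set a : Fin d → ℝ := fun j => (A j j).re with ha
  set b : Fin d → ℝ := fun j => (B j j).re with hb
  have han : ∀ j, 0 ≤ a j := fun j => psd_diag_nonneg hA j
  have hbn : ∀ j, 0 ≤ b j := fun j => psd_diag_nonneg hB j
  have hsa : ∑ j, a j = 1 := by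
    have : (A.trace).re = 1 := by rw [hAt]; simp
    simpa [Matrix.trace, Matrix.diag, Complex.re_sum] using this
  have hsb : ∑ j, b j = 1 := by
    have : (B.trace).re = 1 := by rw [hBt]; simp
    simpa [Matrix.trace, Matrix.diag, Complex.re_sum] using this
  have hple : ∀ j, p j ≤ p ⟨0, hd⟩ := fun j => hpdec.antitone (Fin.mk_le_of_le_val (Nat.zero_le _))
  -- step 1: bound re by norms
  have step1 : (∑ j, ∑ k, ((p j : ℂ) * p k * (A j k * B j k))).re
      ≤ ∑ j, ∑ k, (p j * Real.sqrt (a j) * Real.sqrt (b j)) *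
          (p k * Real.sqrt (a k) * Real.sqrt (b k)) := by
    rw [Complex.re_sum]
    apply Finset.sum_le_sum
    intro j _
    rw [Complex.re_sum]
    apply Finset.sum_le_sum
    intro k _
    have h1 : ((p j : ℂ) * p k * (A j k * B j k)).re ≤ p j * p k * (‖A j k‖ * ‖B j k‖) := by
      have : ((p j : ℂ) * p k * (A j k * B j k)) = ((p j * p k : ℝ) : ℂ) * (A j k * B j k) := by
        push_cast; ring
      rw [this, Complex.re_ofReal_mul]
      have := Complex.re_le_norm (A j k * B j k)
      have habs : ‖A j k * B j k‖ = ‖A j k‖ * ‖B j k‖ := by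
        rw [norm_mul]
      calc p j * p k * (A j k * B j k).re ≤ p j * p k * ‖A j k * B j k‖ := by
            apply mul_le_mul_of_nonneg_left (Complex.re_le_norm _)
              (mul_nonneg (hp0 j).le (hp0 k).le)
        _ = p j * p k * (‖A j k‖ * ‖B j k‖) := by rw [habs]
    refine h1.trans ?_
    have h2 : ‖A j k‖ ≤ Real.sqrt (a j) * Real.sqrt (a k) := psd_entry_bound hA j k
    have h3 : ‖B j k‖ ≤ Real.sqrt (b j) * Real.sqrt (b k) := psd_entry_bound hB j k
    calc p j * p k * (‖A j k‖ * ‖B j k‖)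
        ≤ p j * p k * ((Real.sqrt (a j) * Real.sqrt (a k)) * (Real.sqrt (b j) * Real.sqrt (b k))) := by
          apply mul_le_mul_of_nonneg_left _ (mul_nonneg (hp0 j).le (hp0 k).le)
          exact mul_le_mul h2 h3 (norm_nonneg _)
            (mul_nonneg (Real.sqrt_nonneg _) (Real.sqrt_nonneg _))
      _ = (p j * Real.sqrt (a j) * Real.sqrt (b j)) * (p k * Real.sqrt (a k) * Real.sqrt (b k)) := by
          ring
  -- step 2: the double sum factors as a square
  have step2 : ∑ j, ∑ k, (p j * Real.sqrt (a j) * Real.sqrt (b j)) *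
      (p k * Real.sqrt (a k) * Real.sqrt (b k))
      = (∑ j, p j * Real.sqrt (a j) * Real.sqrt (b j)) ^ 2 := by
    rw [sq, Finset.sum_mul_sum]
  have hterm : ∀ j, 0 ≤ Real.sqrt (a j) * Real.sqrt (b j) :=
    fun j => mul_nonneg (Real.sqrt_nonneg _) (Real.sqrt_nonneg _)
  have step3 : ∑ j, p j * Real.sqrt (a j) * Real.sqrt (b j)
      ≤ p ⟨0, hd⟩ * ∑ j, Real.sqrt (a j) * Real.sqrt (b j) := by
    rw [Finset.mul_sum]
    apply Finset.sum_le_sum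
    intro j _
    rw [mul_assoc]
    exact mul_le_mul_of_nonneg_right (hple j) (hterm j)
  have step4 : (∑ j, Real.sqrt (a j) * Real.sqrt (b j)) ^ 2 ≤ 1 := by
    have := Finset.sum_sq_le_sum_mul_sum_of_sq_eq_mul Finset.univ
      (r := fun j => Real.sqrt (a j) * Real.sqrt (b j)) (f := a) (g := b)
      (fun j _ => han j) (fun j _ => hbn j)
      (fun j _ => by rw [mul_pow, Real.sq_sqrt (han j), Real.sq_sqrt (hbn j)])
    rw [hsa, hsb] at this
    simpa using this
  have hsum_nonneg : 0 ≤ ∑ j, p j * Real.sqrt (a j) * Real.sqrt (b j) :=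
    Finset.sum_nonneg fun j _ => by
      rw [mul_assoc]; exact mul_nonneg (hp0 j).le (hterm j)
  calc (∑ j, ∑ k, ((p j : ℂ) * p k * (A j k * B j k))).re
      ≤ (∑ j, p j * Real.sqrt (a j) * Real.sqrt (b j)) ^ 2 := by rw [← step2]; exact step1
    _ ≤ (p ⟨0, hd⟩ * ∑ j, Real.sqrt (a j) * Real.sqrt (b j)) ^ 2 := by
        apply pow_le_pow_left₀ hsum_nonneg step3
    _ = p ⟨0, hd⟩ ^ 2 * (∑ j, Real.sqrt (a j) * Real.sqrt (b j)) ^ 2 := by ring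
    _ ≤ p ⟨0, hd⟩ ^ 2 * 1 := mul_le_mul_of_nonneg_left step4 (sq_nonneg _)
    _ = p ⟨0, hd⟩ ^ 2 := mul_one _

lemma dot_eval {d : ℕ} (p : Fin d → ℝ) (M : Matrix (Fin d × Fin d) (Fin d × Fin d) ℂ) :
    (star (fun q : Fin d × Fin d => if q.1 = q.2 then (p q.1 : ℂ) else 0)) ⬝ᵥ
      (M.mulVec (fun q : Fin d × Fin d => if q.1 = q.2 then (p q.1 : ℂ) else 0))
    = ∑ j, ∑ k, (p j : ℂ) * p k * M (j, j) (k, k) := by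
  simp only [dotProduct, mulVec, Pi.star_apply, Fintype.sum_prod_type,
    apply_ite (star : ℂ → ℂ), star_zero, Complex.star_def, Complex.conj_ofReal,
    ite_mul, mul_ite, zero_mul, mul_zero, Finset.sum_ite_eq, Finset.sum_ite_eq',
    Finset.mem_univ, if_true]
  exact Finset.sum_congr rfl fun j _ => by
    rw [Finset.mul_sum]
    exact Finset.sum_congr rfl fun k _ => by ring

lemma kron_conjTranspose {d : ℕ} (A B : Matrix (Fin d) (Fin d) ℂ) :
    (A ⊗ₖ B)ᴴ = Aᴴ ⊗ₖ Bᴴ := by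
  ext ⟨i1, i2⟩ ⟨j1, j2⟩
  simp [Matrix.conjTranspose_apply, Matrix.kroneckerMap_apply, star_mul', mul_comm]

theorem separable_overlap_le' (d : ℕ) (hd : 0 < d)
    (ρ : Matrix (Fin d × Fin d) (Fin d × Fin d) ℂ)
    (hsep : ∃ (k : ℕ) (w : Fin k → ℝ) (σA σB : Fin k → Matrix (Fin d) (Fin d) ℂ),
    (∀ i, 0 ≤ w i) ∧ (∑ i, w i = 1) ∧
    (∀ i, (σA i).PosSemidef ∧ (σA i).trace = 1) ∧
    (∀ i, (σB i).PosSemidef ∧ (σB i).trace = 1) ∧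
    ρ = ∑ i, (w i : ℂ) • (σA i ⊗ₖ σB i))
    (p : Fin d → ℝ) (hp0 : ∀ j, 0 < p j) (hpdec : StrictAnti p) (hp1 : ∑ j, p j ^ 2 = 1) :
    ∀ U ∈ Matrix.unitaryGroup (Fin d) ℂ, ∀ V ∈ Matrix.unitaryGroup (Fin d) ℂ,
      ((star (fun q : Fin d × Fin d => if q.1 = q.2 then (p q.1 : ℂ) else 0)) ⬝ᵥ
        (((U ⊗ₖ V) * ρ * (U ⊗ₖ V)ᴴ).mulVec
          (fun q : Fin d × Fin d => if q.1 = q.2 then (p q.1 : ℂ) else 0))).re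
      ≤ p ⟨0, hd⟩ ^ 2 := by
  intro U hU V hV
  obtain ⟨n, w, σA, σB, hw, hw1, hσA, hσB, hρ⟩ := hsep
  have hUU : Uᴴ * U = 1 := by
    rw [← Matrix.star_eq_conjTranspose]; exact (Unitary.mem_iff.mp hU).1
  have hVV : Vᴴ * V = 1 := by
    rw [← Matrix.star_eq_conjTranspose]; exact (Unitary.mem_iff.mp hV).1
  have hM : (U ⊗ₖ V) * ρ * (U ⊗ₖ V)ᴴ
      = ∑ i, (w i : ℂ) • ((U * σA i * Uᴴ) ⊗ₖ (V * σB i * Vᴴ)) := by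
    rw [hρ, Finset.mul_sum, Finset.sum_mul]
    refine Finset.sum_congr rfl fun i _ => ?_
    rw [Matrix.mul_smul, Matrix.smul_mul, kron_conjTranspose,
      Matrix.mul_kronecker_mul, Matrix.mul_kronecker_mul]
  have swap : ∀ (f : Fin n → Fin d → Fin d → ℂ),
      (∑ j, ∑ m, (p j : ℂ) * p m * ∑ i, (w i : ℂ) * f i j m)
      = ∑ i, (w i : ℂ) * ∑ j, ∑ m, (p j : ℂ) * p m * f i j m := by
    intro f
    simp_rw [Finset.mul_sum]
    have h1 : ∀ j : Fin d, ∑ m : Fin d, ∑ i : Fin n, (p j : ℂ) * p m * ((w i : ℂ) * f i j m)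
        = ∑ i : Fin n, ∑ m : Fin d, (p j : ℂ) * p m * ((w i : ℂ) * f i j m) :=
      fun j => Finset.sum_comm
    simp_rw [h1]
    rw [Finset.sum_comm]
    exact Finset.sum_congr rfl fun i _ => Finset.sum_congr rfl fun j _ =>
      Finset.sum_congr rfl fun m _ => by ring
  rw [dot_eval, hM]
  simp only [Matrix.sum_apply, Matrix.smul_apply, Matrix.kroneckerMap_apply, smul_eq_mul]
  rw [swap (fun i j m => (U * σA i * Uᴴ) j m * (V * σB i * Vᴴ) j m), Complex.re_sum]
  have hbound : ∀ i, ((w i : ℂ) *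
      ∑ j, ∑ m, (p j : ℂ) * p m * ((U * σA i * Uᴴ) j m * (V * σB i * Vᴴ) j m)).re
      ≤ w i * p ⟨0, hd⟩ ^ 2 := by
    intro i
    rw [Complex.re_ofReal_mul]
    refine mul_le_mul_of_nonneg_left ?_ (hw i)
    refine key_lemma hd p hp0 hpdec
      ((hσA i).1.mul_mul_conjTranspose_same U) ((hσB i).1.mul_mul_conjTranspose_same V) ?_ ?_
    · rw [Matrix.trace_mul_cycle, hUU, one_mul, (hσA i).2]
    · rw [Matrix.trace_mul_cycle, hVV, one_mul, (hσB i).2]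
  calc ∑ i, ((w i : ℂ) *
        ∑ j, ∑ m, (p j : ℂ) * p m * ((U * σA i * Uᴴ) j m * (V * σB i * Vᴴ) j m)).re
      ≤ ∑ i, w i * p ⟨0, hd⟩ ^ 2 := Finset.sum_le_sum fun i _ => hbound i
    _ = p ⟨0, hd⟩ ^ 2 := by rw [← Finset.sum_mul, hw1, one_mul]

/-- For a separable state `ρ` and `|Ψ⟩ = ∑ⱼ pⱼ|j⟩⊗|j⟩` with strictly decreasing positive
coefficients, `max_{U,V} ⟨Ψ|(U⊗V)ρ(U†⊗V†)|Ψ⟩ ≤ p₀²`. -/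
theorem separable_overlap_le (d : ℕ) (hd : 0 < d)
    (ρ : Matrix (Fin d × Fin d) (Fin d × Fin d) ℂ) (hsep : IsSepState ρ)
    (p : Fin d → ℝ) (hp0 : ∀ j, 0 < p j) (hpdec : StrictAnti p) (hp1 : ∑ j, p j ^ 2 = 1) :
    ∀ U ∈ Matrix.unitaryGroup (Fin d) ℂ, ∀ V ∈ Matrix.unitaryGroup (Fin d) ℂ,
      ((star (fun q : Fin d × Fin d => if q.1 = q.2 then (p q.1 : ℂ) else 0)) ⬝ᵥ
        (((U ⊗ₖ V) * ρ * (U ⊗ₖ V)ᴴ).mulVec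
          (fun q : Fin d × Fin d => if q.1 = q.2 then (p q.1 : ℂ) else 0))).re
      ≤ p ⟨0, hd⟩ ^ 2 := by
  exact separable_overlap_le' d hd ρ hsep p hp0 hpdec hp1
end

section
/- Let γ_1, ..., γ_n ∈ (1/2, 1) and β_j = γ_j/(1−γ_j), and suppose β_j > Π_{l=j+1}^n β_l for every j < n and β_n > 1. For j ∈ {0,...,2^n−1} with binary digits j = (j_1...j_n)₂ define p_j = Π_{l=1}^n √(γ_l^{1−j_l}(1−γ_l)^{j_l}). Then the sequence (p_j) is strictly decreasing: j < k implies p_j > p_k. -/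
open scoped BigOperators

private lemma key_lemma_s16 (b : ℕ → ℝ) :
    ∀ n : ℕ, (∀ i < n, 1 < b i) → (∀ i < n, (∏ t ∈ Finset.range i, b t) < b i) →
    ∀ j k : ℕ, j < k → k < 2 ^ n →
      (∏ i ∈ Finset.range n, (if Nat.testBit j i then b i else 1)) <
      (∏ i ∈ Finset.range n, (if Nat.testBit k i then b i else 1)) := by
  intro n
  induction n with
  | zero => intro _ _ j k hjk hk; omega
  | succ n ih =>
    intro h1 h2 j k hjk hk
    have h1' : ∀ i < n, 1 < b i := fun i hi => h1 i (by omega)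
    have h2' : ∀ i < n, (∏ t ∈ Finset.range i, b t) < b i := fun i hi => h2 i (by omega)
    have hF1 : ∀ m : ℕ, (1:ℝ) ≤ ∏ i ∈ Finset.range n, (if Nat.testBit m i then b i else 1) := by
      intro m
      have := Finset.prod_le_prod (s := Finset.range n) (f := fun _ => (1:ℝ))
        (g := fun i => if Nat.testBit m i then b i else 1)
        (by intro i hi; norm_num)
        (by intro i hi
            split
            · linarith [h1' i (Finset.mem_range.mp hi)]
            · norm_num)
      simpa using this
    have hFle : ∀ m : ℕ, (∏ i ∈ Finset.range n, (if Nat.testBit m i then b i else 1)) ≤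
        ∏ i ∈ Finset.range n, b i := by
      intro m
      refine Finset.prod_le_prod ?_ ?_
      · intro i hi; split
        · linarith [h1' i (Finset.mem_range.mp hi)]
        · norm_num
      · intro i hi; split
        · exact le_refl _
        · exact le_of_lt (h1' i (Finset.mem_range.mp hi))
    rw [Finset.prod_range_succ, Finset.prod_range_succ]
    have htj := Nat.testBit_eq_decide_div_mod_eq (x := j) (i := n)
    have htk := Nat.testBit_eq_decide_div_mod_eq (x := k) (i := n)
    have hjd : j / 2 ^ n < 2 := by
      apply Nat.div_lt_of_lt_mul; rw [pow_succ] at hk; omega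
    have hkd : k / 2 ^ n < 2 := by
      apply Nat.div_lt_of_lt_mul; rw [pow_succ] at hk; omega
    have e1 := Nat.div_add_mod j (2 ^ n)
    have e2 := Nat.div_add_mod k (2 ^ n)
    have hp : 0 < 2 ^ n := (by positivity)
    have hmj : j % 2 ^ n < 2 ^ n := Nat.mod_lt _ hp
    have hmk : k % 2 ^ n < 2 ^ n := Nat.mod_lt _ hp
    by_cases hj : Nat.testBit j n = true <;> by_cases hk' : Nat.testBit k n = true
    · -- both true : same top bit
      rw [if_pos hj, if_pos hk']
      have tj : j / 2 ^ n % 2 = 1 := of_decide_eq_true (htj.symm.trans hj)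
      have tk : k / 2 ^ n % 2 = 1 := of_decide_eq_true (htk.symm.trans hk')
      have dj1 : j / 2 ^ n = 1 := by
        generalize j / 2 ^ n = x at hjd tj ⊢; omega
      have dk1 : k / 2 ^ n = 1 := by
        generalize k / 2 ^ n = x at hkd tk ⊢; omega
      rw [dj1, mul_one] at e1
      rw [dk1, mul_one] at e2
      have hmodlt : j % 2 ^ n < k % 2 ^ n := by omega
      have hklt : k % 2 ^ n < 2 ^ n := Nat.mod_lt _ ((by positivity))
      have := ih h1' h2' (j % 2 ^ n) (k % 2 ^ n) hmodlt hklt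
      have ej : (∏ i ∈ Finset.range n, (if Nat.testBit (j % 2 ^ n) i then b i else 1)) =
          ∏ i ∈ Finset.range n, (if Nat.testBit j i then b i else 1) := by
        refine Finset.prod_congr rfl ?_
        intro i hi
        rw [Nat.testBit_mod_two_pow, decide_eq_true (Finset.mem_range.mp hi), Bool.true_and]
      have ek : (∏ i ∈ Finset.range n, (if Nat.testBit (k % 2 ^ n) i then b i else 1)) =
          ∏ i ∈ Finset.range n, (if Nat.testBit k i then b i else 1) := by
        refine Finset.prod_congr rfl ?_
        intro i hi
        rw [Nat.testBit_mod_two_pow, decide_eq_true (Finset.mem_range.mp hi), Bool.true_and]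
      rw [ej, ek] at this
      have hb : (0:ℝ) < b n := by linarith [h1 n (by omega)]
      exact mul_lt_mul_of_pos_right this hb
    · -- j top bit true, k top bit false : impossible
      exfalso
      have hkf : Nat.testBit k n = false := by simpa using hk'
      have tj : j / 2 ^ n % 2 = 1 := of_decide_eq_true (htj.symm.trans hj)
      have tk : ¬ (k / 2 ^ n % 2 = 1) := of_decide_eq_false (htk.symm.trans hkf)
      have dj1 : j / 2 ^ n = 1 := by
        generalize j / 2 ^ n = x at hjd tj ⊢; omega
      have dk0 : k / 2 ^ n = 0 := by
        generalize k / 2 ^ n = x at hkd tk ⊢; omega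
      rw [dj1, mul_one] at e1
      rw [dk0, mul_zero] at e2
      omega
    · -- j false, k true
      rw [if_neg hj, if_pos hk']
      have hb : (1:ℝ) < b n := h1 n (by omega)
      calc (∏ i ∈ Finset.range n, (if Nat.testBit j i then b i else 1)) * 1
          ≤ ∏ i ∈ Finset.range n, b i := by rw [mul_one]; exact hFle j
        _ < b n := h2 n (by omega)
        _ = 1 * b n := by ring
        _ ≤ (∏ i ∈ Finset.range n, (if Nat.testBit k i then b i else 1)) * b n := by
            apply mul_le_mul_of_nonneg_right (hF1 k); linarith
    · -- both false
      rw [if_neg hj, if_neg hk']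
      have hjf : Nat.testBit j n = false := by simpa using hj
      have hkf : Nat.testBit k n = false := by simpa using hk'
      have tj : ¬ (j / 2 ^ n % 2 = 1) := of_decide_eq_false (htj.symm.trans hjf)
      have tk : ¬ (k / 2 ^ n % 2 = 1) := of_decide_eq_false (htk.symm.trans hkf)
      have dj0 : j / 2 ^ n = 0 := by
        generalize j / 2 ^ n = x at hjd tj ⊢; omega
      have dk0 : k / 2 ^ n = 0 := by
        generalize k / 2 ^ n = x at hkd tk ⊢; omega
      rw [dj0, mul_zero] at e1
      rw [dk0, mul_zero] at e2
      have hmodlt : j % 2 ^ n < k % 2 ^ n := by omega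
      have hklt : k % 2 ^ n < 2 ^ n := Nat.mod_lt _ ((by positivity))
      have := ih h1' h2' (j % 2 ^ n) (k % 2 ^ n) hmodlt hklt
      have ej : (∏ i ∈ Finset.range n, (if Nat.testBit (j % 2 ^ n) i then b i else 1)) =
          ∏ i ∈ Finset.range n, (if Nat.testBit j i then b i else 1) := by
        refine Finset.prod_congr rfl ?_
        intro i hi
        rw [Nat.testBit_mod_two_pow, decide_eq_true (Finset.mem_range.mp hi), Bool.true_and]
      have ek : (∏ i ∈ Finset.range n, (if Nat.testBit (k % 2 ^ n) i then b i else 1)) =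
          ∏ i ∈ Finset.range n, (if Nat.testBit k i then b i else 1) := by
        refine Finset.prod_congr rfl ?_
        intro i hi
        rw [Nat.testBit_mod_two_pow, decide_eq_true (Finset.mem_range.mp hi), Bool.true_and]
      rw [ej, ek] at this
      simpa using mul_lt_mul_of_pos_right this (by norm_num : (0:ℝ) < 1)

/-- Strict monotonicity of the coefficients prepared by the subcircuit `W_A`:
with `γₗ ∈ (1/2, 1)`, `βₗ = γₗ/(1−γₗ)`, and `βⱼ > ∏_{l>j} βₗ` for every `j`
(in particular the last `β` exceeds `1`), the coefficients
`p_j = ∏ₗ √(γₗ^{1−jₗ}(1−γₗ)^{jₗ})` (where `jₗ` is the `l`-th binary digit of `j`,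
most significant first) are strictly decreasing in `j ∈ {0,…,2ⁿ−1}`. -/
theorem coefficients_strict_anti (n : ℕ) (γ : Fin n → ℝ)
    (hγ : ∀ l, γ l ∈ Set.Ioo (1 / 2 : ℝ) 1)
    (hβ : ∀ j : Fin n, γ j / (1 - γ j) > ∏ l ∈ Finset.Ioi j, γ l / (1 - γ l)) :
    ∀ j k : ℕ, j < k → k < 2 ^ n →
      (∏ l : Fin n, Real.sqrt (if Nat.testBit k (n - 1 - l.val) then 1 - γ l else γ l))
        < ∏ l : Fin n, Real.sqrt (if Nat.testBit j (n - 1 - l.val) then 1 - γ l else γ l) := by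
  intro j k hjk hk
  have hn : 0 < n := by
    by_contra h
    push_neg at h
    interval_cases n <;> omega
  -- extended gamma
  set γ' : ℕ → ℝ := fun i => if h : i < n then γ ⟨i, h⟩ else (3/4 : ℝ) with hγ'def
  have hγ'mem : ∀ i, γ' i ∈ Set.Ioo (1/2 : ℝ) 1 := by
    intro i
    simp only [hγ'def]
    split
    · exact hγ _
    · constructor <;> norm_num
  set δ : ℕ → ℝ := fun i => γ' (n - 1 - i) with hδdef
  set b : ℕ → ℝ := fun i => δ i / (1 - δ i) with hbdef
  have hδmem : ∀ i, δ i ∈ Set.Ioo (1/2 : ℝ) 1 := fun i => hγ'mem _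
  have hδpos : ∀ i, (0:ℝ) < δ i := fun i => lt_trans (by norm_num) (hδmem i).1
  have hδlt : ∀ i, δ i < 1 := fun i => (hδmem i).2
  have h1δ : ∀ i, (0:ℝ) < 1 - δ i := fun i => by linarith [hδlt i]
  have hb1 : ∀ i, 1 < b i := by
    intro i
    rw [hbdef]
    rw [one_lt_div (h1δ i)]
    linarith [(hδmem i).1]
  -- rewrite products
  have key_eq : ∀ m : ℕ,
      (∏ l : Fin n, Real.sqrt (if Nat.testBit m (n - 1 - l.val) then 1 - γ l else γ l)) ^ 2
        = (∏ i ∈ Finset.range n, δ i) *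
          (∏ i ∈ Finset.range n, (if Nat.testBit m i then b i else 1))⁻¹ := by
    intro m
    have e1 : (∏ l : Fin n, Real.sqrt (if Nat.testBit m (n - 1 - l.val) then 1 - γ l else γ l))
        = ∏ i ∈ Finset.range n,
            Real.sqrt (if Nat.testBit m (n - 1 - i) then 1 - γ' i else γ' i) := by
      rw [← Fin.prod_univ_eq_prod_range]
      refine Finset.prod_congr rfl ?_
      intro l _
      congr 2 <;> · simp only [hγ'def, l.isLt, dif_pos]
    have e2 : (∏ i ∈ Finset.range n,
            Real.sqrt (if Nat.testBit m (n - 1 - i) then 1 - γ' i else γ' i))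
        = ∏ i ∈ Finset.range n,
            Real.sqrt (if Nat.testBit m i then 1 - δ i else δ i) := by
      rw [← Finset.prod_range_reflect
        (fun i => Real.sqrt (if Nat.testBit m i then 1 - δ i else δ i)) n]
      refine Finset.prod_congr rfl ?_
      intro i hi
      have hi' := Finset.mem_range.mp hi
      have : n - 1 - (n - 1 - i) = i := by omega
      simp only [hδdef, this]
    rw [e1, e2, ← Finset.prod_pow]
    have e3 : ∀ i ∈ Finset.range n,
        Real.sqrt (if Nat.testBit m i then 1 - δ i else δ i) ^ 2
          = δ i * (if Nat.testBit m i then b i else 1)⁻¹ := by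
      intro i _
      rw [Real.sq_sqrt]
      · split
        · rw [hbdef]
          have hne : δ i ≠ 0 := ne_of_gt (hδpos i)
          have hne2 : (1:ℝ) - δ i ≠ 0 := ne_of_gt (h1δ i)
          field_simp
        · simp
      · split
        · linarith [h1δ i]
        · linarith [hδpos i]
    rw [Finset.prod_congr rfl e3, Finset.prod_mul_distrib, Finset.prod_inv_distrib]
  -- key lemma hypotheses
  have h2 : ∀ i < n, (∏ t ∈ Finset.range i, b t) < b i := by
    intro i hi
    have hl : n - 1 - i < n := by omega
    have heq : (∏ t ∈ Finset.range i, b t)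
        = ∏ l ∈ Finset.Ioi (⟨n - 1 - i, hl⟩ : Fin n), γ l / (1 - γ l) := by
      refine Finset.prod_bij' (fun t ht => (⟨n - 1 - t, by
          have := Finset.mem_range.mp ht; omega⟩ : Fin n))
        (fun l hl' => n - 1 - l.val) ?_ ?_ ?_ ?_ ?_
      · intro t ht
        have := Finset.mem_range.mp ht
        simp only [Finset.mem_Ioi, Fin.lt_def]
        omega
      · intro l hl'
        simp only [Finset.mem_Ioi, Fin.lt_def] at hl'
        have := l.isLt
        simp only [Finset.mem_range]
        omega
      · intro t ht
        have := Finset.mem_range.mp ht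
        dsimp only
        omega
      · intro l hl'
        simp only [Finset.mem_Ioi, Fin.lt_def] at hl'
        have := l.isLt
        ext
        dsimp only
        omega
      · intro t ht
        have ht' := Finset.mem_range.mp ht
        simp only [hbdef, hδdef, hγ'def]
        have hlt : n - 1 - t < n := by omega
        rw [dif_pos hlt]
    rw [heq]
    have := hβ ⟨n - 1 - i, hl⟩
    have heq2 : b i = γ (⟨n - 1 - i, hl⟩ : Fin n) / (1 - γ (⟨n - 1 - i, hl⟩ : Fin n)) := by
      simp only [hbdef, hδdef, hγ'def, dif_pos hl]
    rw [heq2]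
    exact this
  have hBlt := key_lemma_s16 b n (fun i _ => hb1 i) h2 j k hjk hk
  -- positivity
  have hBpos : ∀ m : ℕ, (0:ℝ) < ∏ i ∈ Finset.range n, (if Nat.testBit m i then b i else 1) := by
    intro m
    refine Finset.prod_pos ?_
    intro i _
    split
    · linarith [hb1 i]
    · norm_num
  have hCpos : (0:ℝ) < ∏ i ∈ Finset.range n, δ i := Finset.prod_pos (fun i _ => hδpos i)
  have hsq : (∏ l : Fin n, Real.sqrt (if Nat.testBit k (n - 1 - l.val) then 1 - γ l else γ l)) ^ 2
      < (∏ l : Fin n, Real.sqrt (if Nat.testBit j (n - 1 - l.val) then 1 - γ l else γ l)) ^ 2 := by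
    rw [key_eq j, key_eq k]
    apply mul_lt_mul_of_pos_left _ hCpos
    exact inv_strictAnti₀ (hBpos j) hBlt
  refine lt_of_pow_lt_pow_left₀ 2 ?_ hsq
  exact Finset.prod_nonneg (fun l _ => Real.sqrt_nonneg _)
end

section
/- For the amplitude-damped Bell state ρ_γ = (N_γ ⊗ id)(|Φ⁺₂⟩⟨Φ⁺₂|) on C² ⊗ C², where N_γ is the amplitude damping channel with parameter γ ∈ [0,1], the fully entangled fraction is χ(ρ_γ) = (2 + 2√(1−γ) − γ)/4, and χ(ρ_γ) > 1/2 if and only if γ < 2√2 − 2. -/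
open Matrix
open scoped Kronecker BigOperators ComplexOrder

/-- Amplitude damping Kraus operator `E₀ = |0⟩⟨0| + √(1−γ)|1⟩⟨1|`. -/
noncomputable def ampE0 (γ : ℝ) : Matrix (Fin 2) (Fin 2) ℂ :=
  !![1, 0; 0, (Real.sqrt (1 - γ) : ℝ)]

/-- Amplitude damping Kraus operator `E₁ = √γ|0⟩⟨1|`. -/
noncomputable def ampE1 (γ : ℝ) : Matrix (Fin 2) (Fin 2) ℂ :=
  !![0, (Real.sqrt γ : ℝ); 0, 0]

/-- The AD-noisy Bell state `ρ_γ = (N_γ ⊗ id)(|Φ⁺₂⟩⟨Φ⁺₂|)`. -/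
noncomputable def adBell (γ : ℝ) : Matrix (Fin 2 × Fin 2) (Fin 2 × Fin 2) ℂ :=
  (ampE0 γ ⊗ₖ (1 : Matrix (Fin 2) (Fin 2) ℂ)) * phiProj 2 *
      (ampE0 γ ⊗ₖ (1 : Matrix (Fin 2) (Fin 2) ℂ))ᴴ
    + (ampE1 γ ⊗ₖ (1 : Matrix (Fin 2) (Fin 2) ℂ)) * phiProj 2 *
      (ampE1 γ ⊗ₖ (1 : Matrix (Fin 2) (Fin 2) ℂ))ᴴ

lemma overlap_eq (γ : ℝ) (U : Matrix (Fin 2) (Fin 2) ℂ) :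
    overlapMAXE (adBell γ) U =
      (Complex.normSq (U 0 0 + (Real.sqrt (1 - γ) : ℝ) * U 1 1)
        + (Real.sqrt γ)^2 * Complex.normSq (U 0 1)) / 4 := by
  have h4 : Real.sqrt 2 ^ 4 = 4 := by
    rw [show (4:ℕ) = 2*2 from rfl, pow_mul, Real.sq_sqrt (by norm_num : (2:ℝ) ≥ 0)]
    norm_num
  simp only [overlapMAXE, adBell, phiProj, phiPlus, ampE0, ampE1, Matrix.trace,
    Matrix.diag_apply, Matrix.mul_apply, Matrix.add_apply, Matrix.kroneckerMap_apply,
    Matrix.conjTranspose_apply, Matrix.vecMulVec_apply, Fintype.sum_prod_type,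
    Fin.sum_univ_two, Matrix.one_apply, Pi.star_apply, Matrix.cons_val', Matrix.cons_val_zero,
    Matrix.cons_val_one, Matrix.head_cons, Matrix.head_fin_const, Matrix.empty_val',
    Matrix.cons_val_fin_one, Matrix.of_apply]
  norm_num [Complex.normSq_apply, Complex.ext_iff]
  ring_nf
  rw [h4]
  ring


/-- For the amplitude-damped Bell state, `χ(ρ_γ) = (2 + 2√(1−γ) − γ)/4`, and
`χ(ρ_γ) > 1/2 ↔ γ < 2√2 − 2`. -/
theorem chi_ad_Bell (γ : ℝ) (hγ : γ ∈ Set.Icc (0 : ℝ) 1) :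
    IsGreatest
      {x : ℝ | ∃ U ∈ Matrix.unitaryGroup (Fin 2) ℂ, x = overlapMAXE (adBell γ) U}
      ((2 + 2 * Real.sqrt (1 - γ) - γ) / 4)
    ∧ ((2 + 2 * Real.sqrt (1 - γ) - γ) / 4 > 1 / 2 ↔ γ < 2 * Real.sqrt 2 - 2) := by
  obtain ⟨hγ0, hγ1⟩ := hγ
  set s := Real.sqrt (1 - γ) with hs
  have hs0 : 0 ≤ s := Real.sqrt_nonneg _
  have hs2 : s ^ 2 = 1 - γ := Real.sq_sqrt (by linarith)
  have hg2 : (Real.sqrt γ) ^ 2 = γ := Real.sq_sqrt hγ0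
  constructor
  · constructor
    · refine ⟨1, ?_, ?_⟩
      · exact Submonoid.one_mem _
      · rw [overlap_eq]
        simp only [Matrix.one_apply_eq, Matrix.one_apply_ne (by decide : (0 : Fin 2) ≠ 1)]
        rw [hg2]
        rw [show (1:ℂ) + (↑(Real.sqrt (1-γ)) : ℂ) * 1 = ((1+s:ℝ):ℂ) by push_cast [hs]; ring,
          Complex.normSq_ofReal, Complex.normSq_zero]
        nlinarith [hs2]
    · rintro x ⟨U, hU, rfl⟩
      rw [overlap_eq, hg2]
      -- unitary constraints
      have hUU := (Matrix.mem_unitaryGroup_iff.mp hU)  -- U * star U = 1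
      have hUU' := (Matrix.mem_unitaryGroup_iff'.mp hU) -- star U * U = 1
      have hrow : Complex.normSq (U 0 0) + Complex.normSq (U 0 1) = 1 := by
        have := congrFun (congrFun hUU 0) 0
        simp only [Matrix.mul_apply, Fin.sum_univ_two, Matrix.star_apply,
          Matrix.one_apply_eq] at this
        have := congrArg Complex.re this
        simpa [Complex.mul_conj] using this
      have hcol : Complex.normSq (U 0 1) + Complex.normSq (U 1 1) = 1 := by
        have := congrFun (congrFun hUU' 1) 1
        simp only [Matrix.mul_apply, Fin.sum_univ_two, Matrix.star_apply,
          Matrix.one_apply_eq] at this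
        have := congrArg Complex.re this
        simpa [Complex.mul_conj', Complex.normSq_apply] using this
      set a := ‖U 0 0‖
      set b := ‖U 1 1‖
      set x := ‖U 0 1‖
      have ha : Complex.normSq (U 0 0) = a ^ 2 := (Complex.sq_norm _).symm
      have hb : Complex.normSq (U 1 1) = b ^ 2 := (Complex.sq_norm _).symm
      have hx : Complex.normSq (U 0 1) = x ^ 2 := (Complex.sq_norm _).symm
      have ha0 : 0 ≤ a := norm_nonneg _
      have hb0 : 0 ≤ b := norm_nonneg _
      have key : Complex.normSq (U 0 0 + (s:ℂ) * U 1 1) ≤ a^2 + s^2 * b^2 + 2 * s * (a * b) := by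
        have h1 : Complex.normSq (U 0 0 + (s:ℂ) * U 1 1)
            = Complex.normSq (U 0 0) + Complex.normSq ((s:ℂ) * U 1 1)
              + 2 * (U 0 0 * (starRingEnd ℂ) ((s:ℂ) * U 1 1)).re := by
          rw [Complex.normSq_add]
        have h2 : (U 0 0 * (starRingEnd ℂ) ((s:ℂ) * U 1 1)).re
            ≤ ‖U 0 0 * (starRingEnd ℂ) ((s:ℂ) * U 1 1)‖ := Complex.re_le_norm _
        have h3 : ‖U 0 0 * (starRingEnd ℂ) ((s:ℂ) * U 1 1)‖ = a * (s * b) := by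
          rw [norm_mul, Complex.norm_conj, norm_mul, Complex.norm_real, Real.norm_of_nonneg hs0]
        rw [h3] at h2
        rw [h1, ha, Complex.normSq_mul, hb, Complex.normSq_ofReal]
        nlinarith [h2]
      rw [ha, hx] at hrow; rw [hx, hb] at hcol
      have hab : a = b := by nlinarith
      rw [hx]
      have hbnd : a^2 + s^2*b^2 + 2*s*(a*b) + γ * x^2 ≤ 2 + 2*s - γ := by
        rw [hab]
        nlinarith [hs2, hcol, sq_nonneg x, hs0, hγ1, mul_nonneg (sq_nonneg x) hs0,
          mul_nonneg hγ0 (sq_nonneg x)]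
      linarith [key]
  · constructor
    · intro h
      have h1 : 2 * s > γ := by linarith
      have h2 : 4 * (1 - γ) > γ ^ 2 := by nlinarith [hs2]
      -- (γ+2)^2 < 8, so γ+2 < 2√2
      have h3 : (γ + 2) ^ 2 < 8 := by nlinarith
      have hsq2 : Real.sqrt 2 ^ 2 = 2 := Real.sq_sqrt (by norm_num)
      nlinarith [Real.sqrt_nonneg 2, hsq2, sq_nonneg (γ + 2 - 2 * Real.sqrt 2)]
    · intro h
      have hsq2 : Real.sqrt 2 ^ 2 = 2 := Real.sq_sqrt (by norm_num)
      have hs2' : Real.sqrt 2 ≥ 1 := by nlinarith [Real.sqrt_nonneg 2]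
      have h3 : (γ + 2) ^ 2 < 8 := by nlinarith
      have h4 : γ ^ 2 < 4 * s ^ 2 := by nlinarith [hs2]
      have h5 : γ < 2 * s := by nlinarith
      linarith
end
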